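/- arXiv:1803.07475 — 6 statements merged into one kernel-verified Lean document; each statement's English description precedes it below -/
import Mathlib

section
/- For every R > 0 and λ > 0, the partial derivative with respect to R of ψ(s,R) = (√λ R / sinh(√λ R)) · (sinh(s √λ R)/(s √λ R)) is strictly negative for every s ∈ (0,1); equivalently, for fixed s ∈ (0,1), the map R ↦ (R/sinh(√λ R)) · (sinh(s√λ R)/(s R)) is strictly decreasing on (0, ∞). -/
/-!
Writing `a = √λ`, on `R > 0` both functions equal `sinh (s * (a * R)) / sinh (a * R) / s`, so
everything reduces to `x ↦ sinh (s x) / sinh x` being decreasing on `(0, ∞)`. Its derivative has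
the sign of `s cosh (s x) sinh x - sinh (s x) cosh x`, which vanishes at `0` and has derivative
`-(1 - s²) sinh (s x) sinh x < 0`.
-/

open Real Set Topology

namespace Real

theorem hasDerivAt_sinh_mul_cosh_sub_mul_cosh_mul_sinh (s x : ℝ) :
    HasDerivAt (fun x => sinh (s * x) * cosh x - s * cosh (s * x) * sinh x)
      ((1 - s ^ 2) * (sinh (s * x) * sinh x)) x :=
  have hsx := hasDerivAt_const_mul (x := x) s
  ((hsx.sinh.mul (hasDerivAt_cosh x)).sub ((hsx.cosh.const_mul s).mul (hasDerivAt_sinh x)))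
    |>.congr_deriv (by ring)

theorem mul_cosh_mul_mul_sinh_lt_sinh_mul_mul_cosh {s x : ℝ} (hs0 : 0 < s) (hs1 : s < 1)
    (hx : 0 < x) : s * cosh (s * x) * sinh x < sinh (s * x) * cosh x := by
  have hmono : StrictMonoOn (fun x => sinh (s * x) * cosh x - s * cosh (s * x) * sinh x)
      (Ici 0) := by
    refine strictMonoOn_of_deriv_pos (convex_Ici 0) (by fun_prop) fun y hy => ?_
    rw [interior_Ici] at hy
    rw [(hasDerivAt_sinh_mul_cosh_sub_mul_cosh_mul_sinh s y).deriv]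
    have hs2 : 0 < 1 - s ^ 2 := by nlinarith
    have := sinh_pos_iff.mpr (mul_pos hs0 hy)
    have := sinh_pos_iff.mpr hy
    positivity
  have := hmono self_mem_Ici hx.le hx
  simp only [mul_zero, sinh_zero, zero_mul, sub_zero] at this
  linarith

theorem hasDerivAt_sinh_mul_div_sinh (s : ℝ) {x : ℝ} (hx : x ≠ 0) :
    HasDerivAt (fun x => sinh (s * x) / sinh x)
      ((s * cosh (s * x) * sinh x - sinh (s * x) * cosh x) / sinh x ^ 2) x :=
  ((hasDerivAt_const_mul s).sinh.div (hasDerivAt_sinh x) (sinh_ne_zero.mpr hx)).congr_deriv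
    (by ring)

theorem deriv_sinh_mul_div_sinh_neg {s x : ℝ} (hs0 : 0 < s) (hs1 : s < 1) (hx : 0 < x) :
    deriv (fun x => sinh (s * x) / sinh x) x < 0 := by
  rw [(hasDerivAt_sinh_mul_div_sinh s hx.ne').deriv]
  exact div_neg_of_neg_of_pos (sub_neg.mpr (mul_cosh_mul_mul_sinh_lt_sinh_mul_mul_cosh hs0 hs1 hx))
    (pow_pos (sinh_pos_iff.mpr hx) 2)

theorem strictAntiOn_sinh_mul_div_sinh {s : ℝ} (hs0 : 0 < s) (hs1 : s < 1) :
    StrictAntiOn (fun x => sinh (s * x) / sinh x) (Ioi 0) := by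
  refine strictAntiOn_of_deriv_neg (convex_Ioi 0) (fun x hx => ?_) fun x hx => ?_
  · exact (hasDerivAt_sinh_mul_div_sinh s (ne_of_gt hx)).continuousAt.continuousWithinAt
  · rw [interior_Ioi] at hx
    exact deriv_sinh_mul_div_sinh_neg hs0 hs1 hx

end Real

theorem stmt_5 (l : ℝ) (hl : 0 < l) (s : ℝ) (hs : s ∈ Set.Ioo (0:ℝ) 1) :
    (∀ R : ℝ, 0 < R →
      deriv (fun R : ℝ =>
        (Real.sqrt l * R / Real.sinh (Real.sqrt l * R)) *
          (Real.sinh (s * Real.sqrt l * R) / (s * Real.sqrt l * R))) R < 0) ∧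
    StrictAntiOn
      (fun R : ℝ => (R / Real.sinh (Real.sqrt l * R)) *
        (Real.sinh (s * Real.sqrt l * R) / (s * R))) (Set.Ioi 0) := by
  obtain ⟨hs0, hs1⟩ := hs
  have ha : 0 < √l := sqrt_pos.mpr hl
  set h : ℝ → ℝ := fun x => sinh (s * x) / sinh x
  set φ : ℝ → ℝ := fun R => h (√l * R) / s
  have hsinh (R : ℝ) (hR : 0 < R) : sinh (√l * R) ≠ 0 :=
    (sinh_pos_iff.mpr (mul_pos ha hR)).ne'
  refine ⟨fun R hR => ?_, fun x hx y hy hxy => ?_⟩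
  · have hEq : (fun R => √l * R / sinh (√l * R) * (sinh (s * √l * R) / (s * √l * R)))
        =ᶠ[𝓝 R] φ := by
      filter_upwards [Ioi_mem_nhds hR] with y (hy : 0 < y)
      simp only [φ, h]
      field_simp [hsinh y hy, hy.ne']
    have hφ : HasDerivAt φ (deriv h (√l * R) * √l / s) R :=
      ((hasDerivAt_sinh_mul_div_sinh s (mul_pos ha hR).ne').differentiableAt.hasDerivAt.comp R
        (hasDerivAt_const_mul √l)).div_const s
    rw [hEq.deriv_eq, hφ.deriv]
    exact div_neg_of_neg_of_pos
      (mul_neg_of_neg_of_pos (deriv_sinh_mul_div_sinh_neg hs0 hs1 (mul_pos ha hR)) ha) hs0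
  · have hEq (R : ℝ) (hR : 0 < R) :
        R / sinh (√l * R) * (sinh (s * √l * R) / (s * R)) = φ R := by
      simp only [φ, h]
      field_simp [hsinh R hR, hR.ne']
    dsimp only
    rw [hEq x hx, hEq y hy]
    exact div_lt_div_of_pos_right (strictAntiOn_sinh_mul_div_sinh hs0 hs1 (mul_pos ha hx)
      (mul_pos ha hy) (mul_lt_mul_of_pos_left hxy ha)) hs0
end

section
/- Let a > 0, let v ∈ C¹[0,a] with v(0) = 0 and v'(0) ≠ 0, and let F be C¹ on an open set containing the graph {(φ(r), r) : 0 ≤ r ≤ a} with F(φ(0), 0) = 0. Suppose φ ∈ C[0,a] ∩ C¹(0,a] solves v(r)·φ'(r) = F(φ(r), r) on (0,a], and that γ := F_φ(φ(0),0)/v'(0) < 0. Then φ is differentiable at 0 with derivative F_r(φ(0),0)/(v'(0) - F_φ(φ(0),0)), and φ' is continuous at 0 (so φ ∈ C¹[0,a]). -/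
open Real Set Filter

open Topology Asymptotics

/-!
Put `L = F_r / (v'(0) - F_φ)` and `g(r) = φ(r) - φ(0) - L r`. Linearising `F` at `(φ(0), 0)`
turns the equation into `v g' = F_φ g + R` with `R = o(|g| + r)` and `v(r) = v'(0) r + o(r)`.
Because `F_φ / v'(0) < 0`, wherever `|g| ≥ c r` the linear term dominates and `g g' < 0`, so
`|g|` decreases there. Moving left from a point of that region `|g|` grows while `c r` shrinks,
so the region is never left, contradicting `g → 0`. Hence `g = o(r)`, which is the derivative
at `0`, and then `g' = (F_φ g + R) / v` with numerator `o(r)` and `|v| ≍ r` tends to `0`.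
-/

lemma le_apply_of_hasDerivAt_neg_of_eq_right {w w' : ℝ → ℝ} {s t : ℝ}
    (hw : ∀ x ∈ Icc s t, HasDerivAt w (w' x) x)
    (hneg : ∀ x ∈ Ioc s t, w x = w t → w' x < 0) : ∀ x ∈ Icc s t, w t ≤ w x := by
  -- Mathlib's fencing theorem runs rightwards, so apply it to `y ↦ -w (-y)` on `[-t, -s]`.
  have hf : ∀ y ∈ Icc (-t) (-s), HasDerivAt (fun y => -w (-y)) (w' (-y)) y := fun y hy => by
    simpa [Function.comp_def] using
      ((hw (-y) ⟨le_neg.1 hy.2, neg_le.1 hy.1⟩).comp y (hasDerivAt_neg y)).fun_neg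
  intro x hx
  have key := image_le_of_deriv_right_lt_deriv_boundary' (a := -t) (b := -s)
    (fun y hy => (hf y hy).continuousAt.continuousWithinAt)
    (fun y hy => (hf y (Ico_subset_Icc_self hy)).hasDerivWithinAt) (B := fun _ => -w t)
    (by simp) continuousOn_const (fun _ _ => hasDerivWithinAt_const _ _ _)
    (fun y hy hyt => hneg (-y) ⟨lt_neg.1 hy.2, neg_le.1 hy.1⟩ (by simpa using hyt))
    (x := -x) ⟨neg_le_neg hx.2, neg_le_neg hx.1⟩
  simpa using key

lemma le_of_tendsto_zero_of_deriv_neg {w w' B : ℝ → ℝ} {b : ℝ}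
    (hB : MonotoneOn B (Ioc 0 b)) (hB0 : ∀ r ∈ Ioc 0 b, 0 ≤ B r)
    (hw : ∀ r ∈ Ioc 0 b, HasDerivAt w (w' r) r) (hw0 : Tendsto w (𝓝[>] 0) (𝓝 0))
    (hneg : ∀ r ∈ Ioc 0 b, B r ≤ w r → w' r < 0) : ∀ r ∈ Ioc 0 b, w r ≤ B r := by
  intro t ht
  by_contra! hBt
  have hsub : ∀ {s}, 0 < s → Icc s t ⊆ Ioc 0 b := fun hs x hx =>
    ⟨hs.trans_le hx.1, hx.2.trans ht.2⟩
  have hge : ∀ s ∈ Ioc 0 t, w t ≤ w s := fun s hs =>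
    le_apply_of_hasDerivAt_neg_of_eq_right (fun x hx => hw x (hsub hs.1 hx))
      (fun x hx hxt => hneg x (hsub hs.1 (Ioc_subset_Icc_self hx))
        ((hB (hsub hs.1 (Ioc_subset_Icc_self hx)) ht hx.2).trans (hxt ▸ hBt.le)))
      s ⟨le_rfl, hs.2⟩
  obtain ⟨s, hs_lt, hs⟩ :=
    ((hw0.eventually (gt_mem_nhds ((hB0 t ht).trans_lt hBt))).and (Ioc_mem_nhdsGT ht.1)).exists
  exact (hge s hs).not_gt hs_lt

lemma mul_neg_of_dominant_linear_term {u u' v R A P c ε r : ℝ} (hAP : A * P < 0) (hc : 0 < c)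
    (hr : 0 < r) (hε0 : 0 ≤ ε) (hε : ε * |P| * (c + 1) = -(A * P) * c / 2)
    (hv : |v - P * r| ≤ |P| / 2 * r) (hR : |R| ≤ ε * (|u| + r))
    (heq : v * u' = A * u + R) (hu : c * r ≤ |u|) : u * u' < 0 := by
  have hP : 0 < |P| := abs_pos.2 (right_ne_zero_of_mul hAP.ne)
  have hu0 : 0 < |u| := (mul_pos hc hr).trans_le hu
  have hvP : 0 < v * P := by
    have : |(v - P * r) * P| ≤ |P| / 2 * r * |P| := by
      rw [abs_mul]; exact mul_le_mul_of_nonneg_right hv hP.le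
    have hsplit : v * P = (v - P * r) * P + r * (|P| * |P|) := by
      rw [abs_mul_abs_self]; ring
    nlinarith [neg_abs_le ((v - P * r) * P), mul_pos hr (mul_pos hP hP)]
  have hPuR : P * u * R ≤ -(A * P) / 2 * u ^ 2 := by
    have hur : c * (|u| + r) ≤ (c + 1) * |u| := by linarith
    calc P * u * R ≤ |P| * |u| * |R| := by
          rw [← abs_mul, ← abs_mul]; exact le_abs_self _
      _ ≤ |P| * |u| * (ε * (|u| + r)) := by gcongr
      _ ≤ -(A * P) / 2 * u ^ 2 := by
          rw [← sq_abs u]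
          nlinarith [mul_le_mul_of_nonneg_left hur (mul_nonneg (mul_nonneg hε0 hP.le) hu0.le)]
  have : u * u' * (v * P) < 0 := by
    calc u * u' * (v * P) = A * P * u ^ 2 + P * u * R := by linear_combination u * P * heq
      _ < 0 := by nlinarith [pow_pos hu0 2, sq_abs u]
  exact neg_of_mul_neg_left this hvP.le

section SingularODE

variable {u u' v R : ℝ → ℝ} {A P : ℝ}

lemma eventually_mul_deriv_neg (hAP : A * P < 0)
    (hv : (fun r => v r - P * r) =o[𝓝[>] 0] fun r => r)
    (hR : R =o[𝓝[>] 0] fun r => (u r, r)) (heq : ∀ᶠ r in 𝓝[>] 0, v r * u' r = A * u r + R r)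
    {c : ℝ} (hc : 0 < c) : ∀ᶠ r in 𝓝[>] 0, c * r ≤ |u r| → u r * u' r < 0 := by
  have hP : 0 < |P| := abs_pos.2 (right_ne_zero_of_mul hAP.ne)
  -- makes the error term `P u R` at most half of the main term `-A P u²`
  set ε := -(A * P) * c / (2 * |P| * (c + 1))
  have hε0 : 0 < ε := div_pos (mul_pos (neg_pos.2 hAP) hc) (by positivity)
  have hε : ε * |P| * (c + 1) = -(A * P) * c / 2 := by
    simp only [ε]; field_simp
  filter_upwards [hv.bound (half_pos hP), hR.bound hε0, heq,
    self_mem_nhdsWithin] with r hvr hRr heqr hr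
  have hr : 0 < r := hr
  refine mul_neg_of_dominant_linear_term hAP hc hr hε0.le hε ?_ ?_ heqr
  · simpa [abs_of_pos hr] using hvr
  · refine hRr.trans (mul_le_mul_of_nonneg_left ?_ hε0.le)
    rw [Prod.norm_def, norm_eq_abs, norm_eq_abs, abs_of_pos hr]
    exact max_le (le_add_of_nonneg_right hr.le) (le_add_of_nonneg_left (abs_nonneg _))

theorem isLittleO_id_of_singular_ode (hAP : A * P < 0)
    (hu : ∀ᶠ r in 𝓝[>] 0, HasDerivAt u (u' r) r) (hu0 : Tendsto u (𝓝[>] 0) (𝓝 0))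
    (hv : (fun r => v r - P * r) =o[𝓝[>] 0] fun r => r) (hR : R =o[𝓝[>] 0] fun r => (u r, r))
    (heq : ∀ᶠ r in 𝓝[>] 0, v r * u' r = A * u r + R r) : u =o[𝓝[>] 0] fun r => r := by
  refine isLittleO_iff.2 fun c hc => ?_
  obtain ⟨b, hb, hsub⟩ :=
    mem_nhdsGT_iff_exists_Ioc_subset.1 (hu.and (eventually_mul_deriv_neg hAP hv hR heq hc))
  have hsq : ∀ r ∈ Ioc 0 b, u r ^ 2 ≤ (c * r) ^ 2 :=
    le_of_tendsto_zero_of_deriv_neg (w' := fun r => 2 * u r * u' r)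
      (fun x hx y _ hxy => by gcongr; exact mul_nonneg hc.le hx.1.le)
      (fun _ _ => sq_nonneg _)
      (fun r hr => by simpa using ((hsub hr).1.fun_pow 2))
      (by simpa using hu0.pow 2)
      (fun r hr hle => by
        have := (hsub hr).2 (by simpa [abs_of_pos (mul_pos hc hr.1)] using sq_le_sq.1 hle)
        linarith)
  filter_upwards [Ioc_mem_nhdsGT hb] with r hr
  rw [norm_eq_abs, norm_eq_abs, abs_of_pos hr.1]
  exact abs_le_of_sq_le_sq (hsq r hr) (mul_pos hc hr.1).le

theorem tendsto_deriv_of_singular_ode (hP : P ≠ 0) (huo : u =o[𝓝[>] 0] fun r => r)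
    (hv : (fun r => v r - P * r) =o[𝓝[>] 0] fun r => r) (hR : R =o[𝓝[>] 0] fun r => (u r, r))
    (heq : ∀ᶠ r in 𝓝[>] 0, v r * u' r = A * u r + R r) : Tendsto u' (𝓝[>] 0) (𝓝 0) := by
  have hid : (fun r : ℝ => r) =O[𝓝[>] 0] v := by
    have hPv := (hv.trans_isBigO (isBigO_self_const_mul hP (fun r => r) _)).right_isBigO_add
    simp only [sub_add_cancel] at hPv
    exact (isBigO_self_const_mul hP (fun r => r) _).trans hPv
  have hrhs : (fun r => A * u r + R r) =o[𝓝[>] 0] v :=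
    ((huo.const_mul_left A).add
      (hR.trans_isBigO (huo.isBigO.prod_left (isBigO_refl _ _)))).trans_isBigO hid
  refine hrhs.tendsto_div_nhds_zero.congr' ?_
  filter_upwards [heq, hid.eq_zero_imp, self_mem_nhdsWithin] with r heqr hvr hr
  have hv0 : v r ≠ 0 := fun h => (ne_of_gt hr) (hvr h)
  rw [← heqr, mul_div_cancel_left₀ _ hv0]

end SingularODE

theorem hasFDerivAt_of_hasDerivAt_partials {𝕜 : Type*} [NontriviallyNormedField 𝕜]
    {f : 𝕜 × 𝕜 → 𝕜} {p : 𝕜 × 𝕜} {a b : 𝕜} (hf : DifferentiableAt 𝕜 f p)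
    (ha : HasDerivAt (fun x => f (x, p.2)) a p.1) (hb : HasDerivAt (fun t => f (p.1, t)) b p.2) :
    HasFDerivAt f (a • ContinuousLinearMap.fst 𝕜 𝕜 𝕜 + b • ContinuousLinearMap.snd 𝕜 𝕜 𝕜) p := by
  convert hf.hasFDerivAt using 1
  refine ContinuousLinearMap.prod_ext (ContinuousLinearMap.ext_ring ?_)
    (ContinuousLinearMap.ext_ring ?_)
  · simpa using ha.unique
      (hf.hasFDerivAt.comp_hasDerivAt p.1 ((hasDerivAt_id _).prodMk (hasDerivAt_const _ _)))
  · simpa using hb.unique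
      (hf.hasFDerivAt.comp_hasDerivAt p.2 ((hasDerivAt_const _ _).prodMk (hasDerivAt_id _)))

theorem isLittleO_remainder_of_hasFDerivAt {f : ℝ × ℝ → ℝ} {ψ : ℝ → ℝ} {l : Filter ℝ}
    {x₀ a b L : ℝ} (hf : HasFDerivAt f (a • ContinuousLinearMap.fst ℝ ℝ ℝ +
      b • ContinuousLinearMap.snd ℝ ℝ ℝ) (x₀, 0))
    (hψ : Tendsto (fun r => (ψ r, r)) l (𝓝 (x₀, 0))) :
    (fun r => f (ψ r, r) - f (x₀, 0) - (a * (ψ r - x₀) + b * r)) =o[l]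
      fun r => (ψ r - x₀ - L * r, r) := by
  have hr : (fun r => r) =O[l] fun r => (ψ r - x₀ - L * r, r) := isBigO_snd_prod
  have hdisp : (fun r => (ψ r, r) - (x₀, 0)) =O[l] fun r => (ψ r - x₀ - L * r, r) := by
    refine ((isBigO_fst_prod.add (hr.const_mul_left L)).prod_left hr).congr_left fun r => ?_
    simp
  simpa [Function.comp_def] using (hf.isLittleO.comp_tendsto hψ).trans_isBigO hdisp

theorem stmt_12_general (a : ℝ) (ha : 0 < a)
    (v v' φ φ' : ℝ → ℝ) (F : ℝ → ℝ → ℝ) (Fx Fr : ℝ)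
    -- v ∈ C¹[0,a] with derivative v'
    (hv : ∀ r ∈ Set.Icc (0:ℝ) a, HasDerivWithinAt v (v' r) (Set.Icc 0 a) r)
    (hv0 : v 0 = 0)
    -- F is C¹ on an open set U containing the graph {(φ r, r) : 0 ≤ r ≤ a}
    (U : Set (ℝ × ℝ)) (hU : IsOpen U)
    (hgraph : ∀ r ∈ Set.Icc (0:ℝ) a, (φ r, r) ∈ U)
    (hF : ContDiffOn ℝ 1 (fun p : ℝ × ℝ => F p.1 p.2) U)
    (hF0 : F (φ 0) 0 = 0)
    -- partial derivatives of F at (φ 0, 0)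
    (hFx : HasDerivAt (fun x => F x 0) Fx (φ 0))
    (hFr : HasDerivAt (fun t => F (φ 0) t) Fr 0)
    -- φ ∈ C[0,a] ∩ C¹(0,a] solves v·φ' = F(φ,·)
    (hφc : ContinuousOn φ (Set.Icc 0 a))
    (hφ' : ∀ r ∈ Set.Ioc (0:ℝ) a, HasDerivAt φ (φ' r) r)
    (heq : ∀ r ∈ Set.Ioc (0:ℝ) a, v r * φ' r = F (φ r) r)
    -- γ := Fx / v'(0) < 0
    (hγ : Fx / v' 0 < 0) :
    HasDerivWithinAt φ (Fr / (v' 0 - Fx)) (Set.Ici 0) 0 ∧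
    Filter.Tendsto φ' (nhdsWithin 0 (Set.Ioi 0)) (nhds (Fr / (v' 0 - Fx))) := by
  set P := v' 0
  set L := Fr / (P - Fx)
  have hAP : Fx * P < 0 := mul_neg_iff.2 (div_neg_iff.1 hγ)
  have hL : Fx * L + Fr = L * P := by
    have : P - Fx ≠ 0 := fun h =>
      (mul_self_nonneg P).not_gt (by rwa [show Fx = P by linarith] at hAP)
    simp only [L]; field_simp; ring
  have hIoc : Ioc 0 a ∈ 𝓝[>] (0:ℝ) := Ioc_mem_nhdsGT ha
  have hIcc : Icc 0 a ∈ 𝓝[>] (0:ℝ) := mem_of_superset hIoc Ioc_subset_Icc_self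
  have hvo : (fun r => v r - P * r) =o[𝓝[>] 0] fun r => r := by
    simpa [hv0, mul_comm] using hasDerivWithinAt_iff_isLittleO.1
      ((hv 0 ⟨le_rfl, ha.le⟩).mono_of_mem_nhdsWithin hIcc)
  have hφ0 : Tendsto φ (𝓝[>] 0) (𝓝 (φ 0)) :=
    (hφc 0 ⟨le_rfl, ha.le⟩).tendsto.mono_left (nhdsWithin_le_of_mem hIcc)
  have hid : Tendsto (fun r : ℝ => r) (𝓝[>] 0) (𝓝 0) := nhdsWithin_le_nhds
  set g := fun r => φ r - φ 0 - L * r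
  set R := fun r => F (φ r) r - (Fx * (φ r - φ 0) + Fr * r) + L * (P * r - v r)
  have hR : R =o[𝓝[>] 0] fun r => (g r, r) := by
    have hF' := hasFDerivAt_of_hasDerivAt_partials
      ((hF.contDiffAt (hU.mem_nhds (hgraph 0 ⟨le_rfl, ha.le⟩))).differentiableAt one_ne_zero)
      hFx hFr
    refine ((isLittleO_remainder_of_hasFDerivAt hF' (hφ0.prodMk_nhds hid)).add
      ((hvo.const_mul_left (-L)).trans_isBigO isBigO_snd_prod)).congr_left fun r => ?_
    simp only [R, hF0]
    ring
  have hODE : ∀ᶠ r in 𝓝[>] 0, v r * (φ' r - L) = Fx * g r + R r := by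
    filter_upwards [hIoc] with r hr
    linear_combination heq r hr + r * hL
  have hgd : ∀ᶠ r in 𝓝[>] 0, HasDerivAt g (φ' r - L) r := by
    filter_upwards [hIoc] with r hr
    simpa using ((hφ' r hr).sub_const (φ 0)).fun_sub ((hasDerivAt_id r).const_mul L)
  have hgo := isLittleO_id_of_singular_ode hAP hgd
    (by simpa using (hφ0.sub_const (φ 0)).sub (hid.const_mul L)) hvo hR hODE
  refine ⟨hasDerivWithinAt_Ioi_iff_Ici.1 (hasDerivWithinAt_iff_isLittleO.2 ?_), ?_⟩
  · simpa [g, mul_comm] using hgo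
  · simpa using
      (tendsto_deriv_of_singular_ode (right_ne_zero_of_mul hAP.ne) hgo hvo hR hODE).add_const L

theorem stmt_12 (a : ℝ) (ha : 0 < a)
    (v v' φ φ' : ℝ → ℝ) (F : ℝ → ℝ → ℝ) (Fx Fr : ℝ)
    -- v ∈ C¹[0,a] with derivative v'
    (hv : ∀ r ∈ Set.Icc (0:ℝ) a, HasDerivWithinAt v (v' r) (Set.Icc 0 a) r)
    (hv'c : ContinuousOn v' (Set.Icc 0 a))
    (hv0 : v 0 = 0) (hv'0 : v' 0 ≠ 0)
    -- F is C¹ on an open set U containing the graph {(φ r, r) : 0 ≤ r ≤ a}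
    (U : Set (ℝ × ℝ)) (hU : IsOpen U)
    (hgraph : ∀ r ∈ Set.Icc (0:ℝ) a, (φ r, r) ∈ U)
    (hF : ContDiffOn ℝ 1 (fun p : ℝ × ℝ => F p.1 p.2) U)
    (hF0 : F (φ 0) 0 = 0)
    -- partial derivatives of F at (φ 0, 0)
    (hFx : HasDerivAt (fun x => F x 0) Fx (φ 0))
    (hFr : HasDerivAt (fun t => F (φ 0) t) Fr 0)
    -- φ ∈ C[0,a] ∩ C¹(0,a] solves v·φ' = F(φ,·)
    (hφc : ContinuousOn φ (Set.Icc 0 a))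
    (hφ' : ∀ r ∈ Set.Ioc (0:ℝ) a, HasDerivAt φ (φ' r) r)
    (hφ'c : ContinuousOn φ' (Set.Ioc 0 a))
    (heq : ∀ r ∈ Set.Ioc (0:ℝ) a, v r * φ' r = F (φ r) r)
    -- γ := Fx / v'(0) < 0
    (hγ : Fx / v' 0 < 0) :
    HasDerivWithinAt φ (Fr / (v' 0 - Fx)) (Set.Ici 0) 0 ∧
    Filter.Tendsto φ' (nhdsWithin 0 (Set.Ioi 0)) (nhds (Fr / (v' 0 - Fx))) :=
  stmt_12_general a ha v v' φ φ' F Fx Fr hv hv0 U hU hgraph hF hF0 hFx hFr hφc hφ' heq hγ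
end

section
/- Let a > 0, let v ∈ C¹[0,a] with v(0) = 0 and v'(0) ≠ 0, and let F be C¹ on an open set containing the graph of φ with F(φ(0), 0) = 0. Suppose φ is Lipschitz on [0,a], C¹ on (0,a], solves v(r)·φ'(r) = F(φ(r), r) on (0,a], and γ := F_φ(φ(0),0)/v'(0) ∈ [0,1). Then φ is differentiable at 0 with derivative F_r(φ(0),0)/(v'(0) - F_φ(φ(0),0)), and lim_{r→0⁺} φ'(r) equals this value. -/
open Real Set Filter Asymptotics
open scoped Topology

/-!
Put `u r = (φ r - φ 0) / r = slope φ 0 r` and `D = Fr / (v'(0) - Fx)`. The Lipschitz bound makes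
`u` bounded, so differentiability of `F` at `(φ 0, 0)` and `v r / r → v'(0)` give
`φ' = (Fx u + Fr) / v'(0) + η` with `η → 0`. As `u' = (φ' - u) / r`, this is the Euler-type equation
`r u' + β (u - D) = η` with `β = 1 - γ > 0`. With the integrating factor `r ^ β` one gets
`|u r - D| ≤ sup_{(0, r]} |η| / β`, hence `u → D`, i.e. `φ'(0) = D`, and then
`φ' → (Fx D + Fr) / v'(0) = D`.
-/

theorem tendsto_rpow_nhdsGT_zero {β : ℝ} (hβ : 0 < β) :
    Tendsto (fun s : ℝ => s ^ β) (𝓝[>] 0) (𝓝 0) := by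
  simpa [zero_rpow hβ.ne'] using
    (continuousAt_rpow_const 0 β (Or.inr hβ.le)).tendsto.mono_left nhdsWithin_le_nhds

theorem le_div_mul_rpow_of_hasDerivAt_le {G g : ℝ → ℝ} {r β C : ℝ} (hr : 0 < r) (hβ : 0 < β)
    (hG : ∀ s ∈ Ioc 0 r, HasDerivAt G (g s) s) (hg : ∀ s ∈ Ioc 0 r, g s ≤ C * s ^ (β - 1))
    (hG0 : Tendsto G (𝓝[>] 0) (𝓝 0)) : G r ≤ C / β * r ^ β := by
  set h : ℝ → ℝ := fun s => C / β * s ^ β - G s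
  have hderiv : ∀ s ∈ Ioc 0 r, HasDerivAt h (C * s ^ (β - 1) - g s) s := fun s hs => by
    refine (((hasDerivAt_rpow_const (Or.inl hs.1.ne')).const_mul (C / β)).sub
      (hG s hs)).congr_deriv ?_
    field_simp
  have hmono : MonotoneOn h (Ioc 0 r) := by
    refine monotoneOn_of_hasDerivWithinAt_nonneg (f' := fun s => C * s ^ (β - 1) - g s)
      (convex_Ioc 0 r) (fun s hs => (hderiv s hs).continuousAt.continuousWithinAt)
      (fun s hs => ?_) (fun s hs => ?_)
    all_goals rw [interior_Ioc] at hs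
    · exact (hderiv s (Ioo_subset_Ioc_self hs)).hasDerivWithinAt
    · exact sub_nonneg.2 (hg s (Ioo_subset_Ioc_self hs))
  have hh0 : Tendsto h (𝓝[>] 0) (𝓝 0) := by
    simpa using ((tendsto_rpow_nhdsGT_zero hβ).const_mul (C / β)).sub hG0
  have hhr : 0 ≤ h r := le_of_tendsto hh0 <| by
    filter_upwards [Ioo_mem_nhdsGT hr] with s hs
    exact hmono ⟨hs.1, hs.2.le⟩ ⟨hr, le_rfl⟩ hs.2.le
  exact sub_nonneg.1 hhr

theorem abs_le_div_mul_rpow_of_hasDerivAt {G g : ℝ → ℝ} {r β C : ℝ} (hr : 0 < r) (hβ : 0 < β)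
    (hG : ∀ s ∈ Ioc 0 r, HasDerivAt G (g s) s) (hg : ∀ s ∈ Ioc 0 r, |g s| ≤ C * s ^ (β - 1))
    (hG0 : Tendsto G (𝓝[>] 0) (𝓝 0)) : |G r| ≤ C / β * r ^ β := by
  refine abs_le'.2 ⟨le_div_mul_rpow_of_hasDerivAt_le hr hβ hG (fun s hs => ?_) hG0,
    le_div_mul_rpow_of_hasDerivAt_le (G := fun s => -G s) hr hβ (fun s hs => (hG s hs).neg)
      (fun s hs => ?_) (by simpa using hG0.neg)⟩
  · exact (le_abs_self _).trans (hg s hs)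
  · exact (neg_le_abs _).trans (hg s hs)

theorem tendsto_nhdsGT_of_hasDerivAt_euler {u η : ℝ → ℝ} {β D M : ℝ} (hβ : 0 < β)
    (hu : ∀ᶠ r in 𝓝[>] 0, HasDerivAt u ((η r - β * (u r - D)) / r) r)
    (hbdd : ∀ᶠ r in 𝓝[>] 0, |u r| ≤ M) (hη : Tendsto η (𝓝[>] 0) (𝓝 0)) :
    Tendsto u (𝓝[>] 0) (𝓝 D) := by
  set G : ℝ → ℝ := fun s => (u s - D) * s ^ β
  have hG' : ∀ᶠ s in 𝓝[>] 0, HasDerivAt G (η s * s ^ (β - 1)) s := by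
    filter_upwards [hu, self_mem_nhdsWithin] with s hs (hs0 : 0 < s)
    refine ((hs.sub_const D).mul (hasDerivAt_rpow_const (Or.inl hs0.ne'))).congr_deriv ?_
    rw [rpow_sub_one hs0.ne']
    field_simp
    ring
  have hG0 : Tendsto G (𝓝[>] 0) (𝓝 0) := by
    refine isBoundedUnder_le_mul_tendsto_zero (isBoundedUnder_of_eventually_le (a := M + |D|) ?_)
      (tendsto_rpow_nhdsGT_zero hβ)
    filter_upwards [hbdd] with s hs
    simpa using (abs_sub (u s) D).trans (by linarith)
  rw [Metric.tendsto_nhds]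
  intro ε hε
  obtain ⟨r₀, hr₀, hsub⟩ := mem_nhdsGT_iff_exists_Ioc_subset.1
    (hG'.and ((Metric.tendsto_nhds.1 hη) (ε / 2 * β) (by positivity)))
  filter_upwards [Ioc_mem_nhdsGT hr₀] with r hr
  have hg : ∀ s ∈ Ioc 0 r, |η s * s ^ (β - 1)| ≤ ε / 2 * β * s ^ (β - 1) := fun s hs => by
    have hηs : |η s| < ε / 2 * β := by simpa using (hsub ⟨hs.1, hs.2.trans hr.2⟩).2
    rw [abs_mul, abs_of_pos (rpow_pos_of_pos hs.1 _)]
    exact mul_le_mul_of_nonneg_right hηs.le (rpow_nonneg hs.1.le _)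
  have hGr := abs_le_div_mul_rpow_of_hasDerivAt hr.1 hβ
    (fun s hs => (hsub ⟨hs.1, hs.2.trans hr.2⟩).1) hg hG0
  have hrβ : 0 < r ^ β := rpow_pos_of_pos hr.1 β
  rw [mul_div_cancel_right₀ _ hβ.ne', abs_mul, abs_of_pos hrβ] at hGr
  rw [Real.dist_eq]
  exact (le_of_mul_le_mul_right hGr hrβ).trans_lt (half_lt_self hε)

theorem LipschitzOnWith.abs_slope_le {f : ℝ → ℝ} {K : NNReal} {s : Set ℝ}
    (hf : LipschitzOnWith K f s) {x y : ℝ} (hx : x ∈ s) (hy : y ∈ s) : |slope f x y| ≤ K := by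
  rcases eq_or_ne y x with rfl | hxy
  · simp
  rw [slope_def_field, abs_div, div_le_iff₀ (abs_pos.2 (sub_ne_zero.2 hxy))]
  simpa [Real.dist_eq] using hf.dist_le_mul y hy x hx

theorem HasDerivAt.slope_of_ne {f : ℝ → ℝ} {f' x₀ r : ℝ} (hf : HasDerivAt f f' r) (hr : r ≠ x₀) :
    HasDerivAt (slope f x₀) ((f' - slope f x₀ r) / (r - x₀)) r := by
  have hr' : r - x₀ ≠ 0 := sub_ne_zero.2 hr
  have h := (hf.sub_const (f x₀)).div ((hasDerivAt_id r).sub_const x₀) hr'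
  rw [show slope f x₀ = fun s => (f s - f x₀) / (id s - x₀) from funext (slope_def_field f x₀)]
  refine h.congr_deriv ?_
  simp only [id]
  field_simp

theorem HasFDerivAt.apply_eq_partials {F : ℝ → ℝ → ℝ} {f' : ℝ × ℝ →L[ℝ] ℝ} {x t Fx Ft : ℝ}
    (hF : HasFDerivAt (fun p : ℝ × ℝ => F p.1 p.2) f' (x, t))
    (hFx : HasDerivAt (fun y => F y t) Fx x) (hFt : HasDerivAt (fun s => F x s) Ft t)
    (p : ℝ × ℝ) : f' p = p.1 * Fx + p.2 * Ft := by
  have h₁ : HasDerivAt (fun y => F y t) (f' (1, 0)) x :=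
    HasFDerivAt.comp_hasDerivAt (l := fun p : ℝ × ℝ => F p.1 p.2) x hF
      ((hasDerivAt_id' x).prodMk (hasDerivAt_const x t))
  have h₂ : HasDerivAt (fun s => F x s) (f' (0, 1)) t :=
    HasFDerivAt.comp_hasDerivAt (l := fun p : ℝ × ℝ => F p.1 p.2) t hF
      ((hasDerivAt_const t x).prodMk (hasDerivAt_id' t))
  have hp : p = p.1 • ((1 : ℝ), (0 : ℝ)) + p.2 • ((0 : ℝ), (1 : ℝ)) := by simp
  rw [hp, map_add, map_smul, map_smul, h₁.unique hFx, h₂.unique hFt, smul_eq_mul, smul_eq_mul]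
  simp

theorem HasFDerivAt.isLittleO_along_graph {F : ℝ → ℝ → ℝ} {f' : ℝ × ℝ →L[ℝ] ℝ}
    {φ : ℝ → ℝ} {x₀ Fx Fr : ℝ} {l : Filter ℝ} (hl : l ≤ 𝓝 0)
    (hF : HasFDerivAt (fun p : ℝ × ℝ => F p.1 p.2) f' (x₀, 0))
    (hFx : HasDerivAt (fun x => F x 0) Fx x₀) (hFr : HasDerivAt (fun t => F x₀ t) Fr 0)
    (hφ : (fun r => φ r - x₀) =O[l] id) :
    (fun r => F (φ r) r - F x₀ 0 - (Fx * (φ r - x₀) + Fr * r)) =o[l] id := by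
  have hgraph : (fun r => (φ r, r) - (x₀, 0)) =O[l] id :=
    hφ.prod_left ((isBigO_refl id l).congr_left fun r => (sub_zero r).symm)
  have hto : Tendsto (fun r => (φ r, r)) l (𝓝 (x₀, 0)) := by
    simpa using (hgraph.trans_tendsto (tendsto_id.mono_left hl)).add_const (x₀, (0 : ℝ))
  refine ((hF.isLittleO.comp_tendsto hto).trans_isBigO hgraph).congr_left fun r => ?_
  simp [hF.apply_eq_partials hFx hFr, mul_comm]

theorem HasFDerivAt.tendsto_div_sub_slope_partials {F : ℝ → ℝ → ℝ} {f' : ℝ × ℝ →L[ℝ] ℝ}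
    {φ : ℝ → ℝ} {Fx Fr K : ℝ} (hF : HasFDerivAt (fun p : ℝ × ℝ => F p.1 p.2) f' (φ 0, 0))
    (hFx : HasDerivAt (fun x => F x 0) Fx (φ 0)) (hFr : HasDerivAt (fun t => F (φ 0) t) Fr 0)
    (hφ : ∀ᶠ r in 𝓝[>] 0, |slope φ 0 r| ≤ K) :
    Tendsto (fun r => (F (φ r) r - F (φ 0) 0) / r - (Fx * slope φ 0 r + Fr)) (𝓝[>] 0) (𝓝 0) := by
  have hφO : (fun r => φ r - φ 0) =O[𝓝[>] 0] id := by
    refine IsBigO.of_bound K ?_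
    filter_upwards [hφ] with r hr
    have h := sub_smul_slope φ 0 r
    rw [sub_zero, smul_eq_mul, vsub_eq_sub] at h
    rw [← h, norm_mul, mul_comm, Real.norm_eq_abs, id]
    exact mul_le_mul_of_nonneg_right hr (norm_nonneg r)
  refine (hF.isLittleO_along_graph nhdsWithin_le_nhds hFx hFr hφO).tendsto_div_nhds_zero.congr' ?_
  filter_upwards [self_mem_nhdsWithin] with r (hr : 0 < r)
  have := hr.ne'
  simp only [slope_def_field, id, sub_zero]
  field_simp

theorem tendsto_sub_div_of_mul_eq {α : Type*} {l : Filter α} {A B P Q : α → ℝ} {b M : ℝ}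
    (hb : b ≠ 0) (hB : Tendsto B l (𝓝 b)) (hA : ∀ᶠ x in l, |A x| ≤ M)
    (hQA : Tendsto (fun x => Q x - A x) l (𝓝 0)) (hPQ : ∀ᶠ x in l, B x * P x = Q x) :
    Tendsto (fun x => P x - A x / b) l (𝓝 0) := by
  have hinv : Tendsto (fun x => (B x)⁻¹ - b⁻¹) l (𝓝 0) := by
    simpa using (hB.inv₀ hb).sub_const b⁻¹
  have hAinv : Tendsto (fun x => A x * ((B x)⁻¹ - b⁻¹)) l (𝓝 0) :=
    isBoundedUnder_le_mul_tendsto_zero (isBoundedUnder_of_eventually_le (a := M) hA) hinv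
  have hsum := (hQA.div hB hb).add hAinv
  rw [zero_div, zero_add] at hsum
  refine hsum.congr' ?_
  filter_upwards [hPQ, hB.eventually_ne hb] with x hx hBx
  rw [Pi.div_apply, ← hx]
  field_simp
  ring

theorem stmt_13_general (a : ℝ) (ha : 0 < a)
    (v v' φ φ' : ℝ → ℝ) (F : ℝ → ℝ → ℝ) (Fx Fr : ℝ)
    -- v ∈ C¹[0,a] with derivative v'
    (hv : ∀ r ∈ Set.Icc (0:ℝ) a, HasDerivWithinAt v (v' r) (Set.Icc 0 a) r)
    (hv0 : v 0 = 0) (hv'0 : v' 0 ≠ 0)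
    -- F is C¹ on an open set U containing the graph {(φ r, r) : 0 ≤ r ≤ a}
    (U : Set (ℝ × ℝ)) (hU : IsOpen U)
    (hgraph : ∀ r ∈ Set.Icc (0:ℝ) a, (φ r, r) ∈ U)
    (hF : ContDiffOn ℝ 1 (fun p : ℝ × ℝ => F p.1 p.2) U)
    (hF0 : F (φ 0) 0 = 0)
    -- partial derivatives of F at (φ 0, 0)
    (hFx : HasDerivAt (fun x => F x 0) Fx (φ 0))
    (hFr : HasDerivAt (fun t => F (φ 0) t) Fr 0)
    -- φ ∈ C[0,a] ∩ C¹(0,a] solves v·φ' = F(φ,·)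
    (L : NNReal) (hφlip : LipschitzOnWith L φ (Set.Icc 0 a))
    (hφ' : ∀ r ∈ Set.Ioc (0:ℝ) a, HasDerivAt φ (φ' r) r)
    (heq : ∀ r ∈ Set.Ioc (0:ℝ) a, v r * φ' r = F (φ r) r)
    -- γ := Fx / v'(0) ∈ [0,1)
    (hγ1 : Fx / v' 0 < 1) :
    HasDerivWithinAt φ (Fr / (v' 0 - Fx)) (Set.Ici 0) 0 ∧
    Filter.Tendsto φ' (nhdsWithin 0 (Set.Ioi 0)) (nhds (Fr / (v' 0 - Fx))) := by
  have h0 : (0 : ℝ) ∈ Icc 0 a := ⟨le_rfl, ha.le⟩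
  have hIoc : ∀ᶠ r in 𝓝[>] (0 : ℝ), r ∈ Ioc 0 a := Ioc_mem_nhdsGT ha
  have hβ : 0 < 1 - Fx / v' 0 := sub_pos.2 hγ1
  have hFx_ne : v' 0 - Fx ≠ 0 := by
    rw [sub_ne_zero]; rintro rfl; simp [div_self hv'0] at hγ1
  have hslope_le : ∀ᶠ r in 𝓝[>] 0, |slope φ 0 r| ≤ L := by
    filter_upwards [hIoc] with r hr
    exact hφlip.abs_slope_le h0 (Ioc_subset_Icc_self hr)
  have hv_slope : Tendsto (slope v 0) (𝓝[>] 0) (𝓝 (v' 0)) := by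
    have := hasDerivWithinAt_iff_tendsto_slope.1 (hv 0 h0)
    rwa [Icc_sdiff_left, nhdsWithin_Ioc_eq_nhdsGT ha] at this
  obtain ⟨f', hFd⟩ := (hF.contDiffAt (hU.mem_nhds (hgraph 0 h0))).differentiableAt one_ne_zero
  have hη : Tendsto (fun r => φ' r - (Fx * slope φ 0 r + Fr) / v' 0) (𝓝[>] 0) (𝓝 0) := by
    refine tendsto_sub_div_of_mul_eq (M := |Fx| * L + |Fr|) hv'0 hv_slope ?_
      (by simpa [hF0] using hFd.tendsto_div_sub_slope_partials hFx hFr hslope_le) ?_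
    · filter_upwards [hslope_le] with r hr
      exact (abs_add_le _ _).trans (by rw [abs_mul]; gcongr)
    · filter_upwards [hIoc] with r hr
      rw [slope_def_field, hv0, ← heq r hr, sub_zero, sub_zero, div_mul_eq_mul_div]
  have hu : Tendsto (slope φ 0) (𝓝[>] 0) (𝓝 (Fr / (v' 0 - Fx))) := by
    refine tendsto_nhdsGT_of_hasDerivAt_euler hβ ?_ hslope_le hη
    filter_upwards [hIoc] with r hr
    refine ((hφ' r hr).slope_of_ne hr.1.ne').congr_deriv ?_
    field_simp
    ring
  refine ⟨?_, ?_⟩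
  · rwa [hasDerivWithinAt_iff_tendsto_slope, Ici_sdiff_left]
  · have hD : 0 + (Fx * (Fr / (v' 0 - Fx)) + Fr) / v' 0 = Fr / (v' 0 - Fx) := by
      field_simp
      ring
    have h := hη.add (((hu.const_mul Fx).add_const Fr).div_const (v' 0))
    rw [hD] at h
    exact h.congr fun r => sub_add_cancel _ _

theorem stmt_13 (a : ℝ) (ha : 0 < a)
    (v v' φ φ' : ℝ → ℝ) (F : ℝ → ℝ → ℝ) (Fx Fr : ℝ)
    -- v ∈ C¹[0,a] with derivative v'
    (hv : ∀ r ∈ Set.Icc (0:ℝ) a, HasDerivWithinAt v (v' r) (Set.Icc 0 a) r)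
    (hv'c : ContinuousOn v' (Set.Icc 0 a))
    (hv0 : v 0 = 0) (hv'0 : v' 0 ≠ 0)
    -- F is C¹ on an open set U containing the graph {(φ r, r) : 0 ≤ r ≤ a}
    (U : Set (ℝ × ℝ)) (hU : IsOpen U)
    (hgraph : ∀ r ∈ Set.Icc (0:ℝ) a, (φ r, r) ∈ U)
    (hF : ContDiffOn ℝ 1 (fun p : ℝ × ℝ => F p.1 p.2) U)
    (hF0 : F (φ 0) 0 = 0)
    -- partial derivatives of F at (φ 0, 0)
    (hFx : HasDerivAt (fun x => F x 0) Fx (φ 0))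
    (hFr : HasDerivAt (fun t => F (φ 0) t) Fr 0)
    -- φ ∈ C[0,a] ∩ C¹(0,a] solves v·φ' = F(φ,·)
    (L : NNReal) (hφlip : LipschitzOnWith L φ (Set.Icc 0 a))
    (hφ' : ∀ r ∈ Set.Ioc (0:ℝ) a, HasDerivAt φ (φ' r) r)
    (hφ'c : ContinuousOn φ' (Set.Ioc 0 a))
    (heq : ∀ r ∈ Set.Ioc (0:ℝ) a, v r * φ' r = F (φ r) r)
    -- γ := Fx / v'(0) ∈ [0,1)
    (hγ0 : 0 ≤ Fx / v' 0) (hγ1 : Fx / v' 0 < 1) :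
    HasDerivWithinAt φ (Fr / (v' 0 - Fx)) (Set.Ici 0) 0 ∧
    Filter.Tendsto φ' (nhdsWithin 0 (Set.Ioi 0)) (nhds (Fr / (v' 0 - Fx))) :=
  stmt_13_general a ha v v' φ φ' F Fx Fr hv hv0 hv'0 U hU hgraph hF hF0 hFx hFr L hφlip hφ' heq hγ1
end

section
/- Let f, g : ℝ × ℝ → ℝ satisfy f(0,0) = 0, g(0,0) = 1, with f_x, f_t continuous near (0,0), g continuous and locally Lipschitz in x, and θ := f_x(0,0) ∈ (-1, 1). If x, y ∈ C¹[0,T] both solve z(0) = 0, z'(t) = f(z(t),t)/∫₀ᵗ g(z(s),s) ds on (0,T], then there exists t* ∈ (0,T] such that x(t) = y(t) for all t ∈ [0,t*]. -/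
open Real Set Filter intervalIntegral
open Topology MeasureTheory

set_option maxHeartbeats 1000000

/-- FTC helper: a C¹ function on `[0,T]` equals the integral of its derivative. -/
lemma ftc_aux15 {T : ℝ} {x x' : ℝ → ℝ}
    (hxd : ∀ t ∈ Set.Icc (0:ℝ) T, HasDerivWithinAt x (x' t) (Set.Icc 0 T) t)
    (hx'c : ContinuousOn x' (Set.Icc 0 T)) {t : ℝ} (ht : t ∈ Set.Icc (0:ℝ) T) :
    x t - x 0 = ∫ s in (0:ℝ)..t, x' s := by
  have hxc : ContinuousOn x (Set.Icc 0 T) := fun s hs => (hxd s hs).continuousWithinAt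
  rw [intervalIntegral.integral_eq_sub_of_hasDeriv_right_of_le ht.1
    (hxc.mono (Set.Icc_subset_Icc_right ht.2))
    (fun s hs => ((hxd s ⟨hs.1.le, hs.2.le.trans ht.2⟩).hasDerivAt
        (Icc_mem_nhds hs.1 (lt_of_lt_of_le hs.2 ht.2))).hasDerivWithinAt)
    ((hx'c.mono (Set.Icc_subset_Icc_right ht.2)).intervalIntegrable_of_Icc ht.1)]

theorem stmt_15 (f g fx ft : ℝ → ℝ → ℝ)
    (U : Set (ℝ × ℝ)) (hU : IsOpen U) (h0U : ((0:ℝ), (0:ℝ)) ∈ U)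
    (hf0 : f 0 0 = 0) (hg0 : g 0 0 = 1)
    (hfc : ContinuousOn (fun p : ℝ × ℝ => f p.1 p.2) U)
    (hfx : ∀ p ∈ U, HasDerivAt (fun x => f x p.2) (fx p.1 p.2) p.1)
    (hft : ∀ p ∈ U, HasDerivAt (fun t => f p.1 t) (ft p.1 p.2) p.2)
    (hfxc : ContinuousOn (fun p : ℝ × ℝ => fx p.1 p.2) U)
    (hftc : ContinuousOn (fun p : ℝ × ℝ => ft p.1 p.2) U)
    (hgc : ContinuousOn (fun p : ℝ × ℝ => g p.1 p.2) U)
    (hglip : ∀ p ∈ U, ∃ K : ℝ, ∃ V ∈ nhds p, ∀ q ∈ V, ∀ q' ∈ V,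
      (q : ℝ × ℝ).2 = (q' : ℝ × ℝ).2 → |g q.1 q.2 - g q'.1 q'.2| ≤ K * |q.1 - q'.1|)
    (hθ1 : -1 < fx 0 0) (hθ2 : fx 0 0 < 1)
    (T : ℝ) (hT : 0 < T) (x y x' y' : ℝ → ℝ)
    -- x, y ∈ C¹[0,T] solve the singular integro-differential equation
    (hx0 : x 0 = 0)
    (hxd : ∀ t ∈ Set.Icc (0:ℝ) T, HasDerivWithinAt x (x' t) (Set.Icc 0 T) t)
    (hx'c : ContinuousOn x' (Set.Icc 0 T))
    (hxeq : ∀ t ∈ Set.Ioc (0:ℝ) T, x' t = f (x t) t / ∫ s in (0:ℝ)..t, g (x s) s)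
    (hy0 : y 0 = 0)
    (hyd : ∀ t ∈ Set.Icc (0:ℝ) T, HasDerivWithinAt y (y' t) (Set.Icc 0 T) t)
    (hy'c : ContinuousOn y' (Set.Icc 0 T))
    (hyeq : ∀ t ∈ Set.Ioc (0:ℝ) T, y' t = f (y t) t / ∫ s in (0:ℝ)..t, g (y s) s) :
    ∃ tstar ∈ Set.Ioc (0:ℝ) T, ∀ t ∈ Set.Icc (0:ℝ) tstar, x t = y t := by
  -- Constants
  set θ := fx 0 0 with hθdef
  have hθ : |θ| < 1 := abs_lt.2 ⟨hθ1, hθ2⟩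
  have hθnn : 0 ≤ |θ| := abs_nonneg θ
  set ε : ℝ := (1 - |θ|) / 4 with hεdef
  have hε : 0 < ε := by rw [hεdef]; linarith
  have hε1 : ε < 1 := by rw [hεdef]; linarith
  have h1ε : 0 < 1 - ε := by linarith
  set L₁ : ℝ := |θ| + ε with hL₁def
  have hL₁0 : 0 ≤ L₁ := by positivity
  set q : ℝ := L₁ / (1 - ε) with hqdef
  have hq0 : 0 ≤ q := div_nonneg hL₁0 h1ε.le
  have hq1 : q < 1 := by
    rw [hqdef, div_lt_one h1ε, hL₁def, hεdef]; linarith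
  -- Local Lipschitz data for g at the origin
  obtain ⟨K, V, hV, hKlip⟩ := hglip ((0:ℝ), (0:ℝ)) h0U
  set K' : ℝ := max K 0 with hK'def
  have hK'0 : 0 ≤ K' := le_max_right _ _
  -- A small ball on which everything is controlled
  have hUn : U ∈ 𝓝 (((0:ℝ), (0:ℝ))) := hU.mem_nhds h0U
  have h1 : ∀ᶠ p in 𝓝 (((0:ℝ), (0:ℝ))), |fx (p : ℝ × ℝ).1 p.2 - θ| < ε := by
    have hc : ContinuousAt (fun p : ℝ × ℝ => fx p.1 p.2) (0, 0) := hfxc.continuousAt hUn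
    have := hc.eventually (eventually_abs_sub_lt _ hε)
    simpa [hθdef] using this
  have h2 : ∀ᶠ p in 𝓝 (((0:ℝ), (0:ℝ))), |g (p : ℝ × ℝ).1 p.2 - 1| < ε := by
    have hc : ContinuousAt (fun p : ℝ × ℝ => g p.1 p.2) (0, 0) := hgc.continuousAt hUn
    have := hc.eventually (eventually_abs_sub_lt _ hε)
    simpa [hg0] using this
  have h3 : ∀ᶠ p in 𝓝 (((0:ℝ), (0:ℝ))), |ft (p : ℝ × ℝ).1 p.2 - ft 0 0| < 1 := by
    have hc : ContinuousAt (fun p : ℝ × ℝ => ft p.1 p.2) (0, 0) := hftc.continuousAt hUn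
    have := hc.eventually (eventually_abs_sub_lt _ one_pos)
    simpa using this
  have hbig : (U ∩ V ∩ {p : ℝ × ℝ | |fx p.1 p.2 - θ| < ε} ∩ {p : ℝ × ℝ | |g p.1 p.2 - 1| < ε}
      ∩ {p : ℝ × ℝ | |ft p.1 p.2 - ft 0 0| < 1}) ∈ 𝓝 (((0:ℝ), (0:ℝ))) :=
    inter_mem (inter_mem (inter_mem (inter_mem hUn hV) h1) h2) h3
  obtain ⟨r, hr, hrsub⟩ := Metric.mem_nhds_iff.1 hbig
  have hmem : ∀ a b : ℝ, |a| < r → |b| < r →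
      (a, b) ∈ U ∩ V ∩ {p : ℝ × ℝ | |fx p.1 p.2 - θ| < ε} ∩ {p : ℝ × ℝ | |g p.1 p.2 - 1| < ε}
        ∩ {p : ℝ × ℝ | |ft p.1 p.2 - ft 0 0| < 1} := by
    intro a b ha hb
    apply hrsub
    rw [Metric.mem_ball, Prod.dist_eq]
    simp only [Real.dist_eq, sub_zero]
    exact max_lt ha hb
  have hmemU : ∀ a b : ℝ, |a| < r → |b| < r → (a, b) ∈ U := fun a b ha hb =>
    (hmem a b ha hb).1.1.1.1
  have hmemV : ∀ a b : ℝ, |a| < r → |b| < r → (a, b) ∈ V := fun a b ha hb =>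
    (hmem a b ha hb).1.1.1.2
  have hmemfx : ∀ a b : ℝ, |a| < r → |b| < r → |fx a b - θ| < ε := fun a b ha hb =>
    (hmem a b ha hb).1.1.2
  have hmemg : ∀ a b : ℝ, |a| < r → |b| < r → |g a b - 1| < ε := fun a b ha hb =>
    (hmem a b ha hb).1.2
  have hmemft : ∀ a b : ℝ, |a| < r → |b| < r → |ft a b - ft 0 0| < 1 := fun a b ha hb =>
    (hmem a b ha hb).2
  have h0r : |(0:ℝ)| < r := by simpa using hr
  -- Mean value estimates for f
  have hfL : ∀ t a b : ℝ, |t| < r → |a| < r → |b| < r → |f a t - f b t| ≤ L₁ * |a - b| := by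
    intro t a b htr har hbr
    have := Convex.norm_image_sub_le_of_norm_hasDerivWithin_le
      (f := fun z => f z t) (f' := fun z => fx z t) (s := Set.Ioo (-r) r) (C := L₁)
      (fun z hz => (hfx (z, t) (hmemU z t (abs_lt.2 ⟨by linarith [hz.1], hz.2⟩) htr)).hasDerivWithinAt)
      (fun z hz => by
        have h := hmemfx z t (abs_lt.2 ⟨by linarith [hz.1], hz.2⟩) htr
        have h2 := abs_sub_abs_le_abs_sub (fx z t) θ
        simp only [Real.norm_eq_abs]
        rw [hL₁def]; linarith)
      (convex_Ioo _ _) (abs_lt.1 hbr) (abs_lt.1 har)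
    simpa [Real.norm_eq_abs] using this
  set Mft : ℝ := |ft 0 0| + 1 with hMftdef
  have hMft0 : 0 ≤ Mft := by positivity
  have hf0t : ∀ t : ℝ, |t| < r → |f 0 t| ≤ Mft * |t| := by
    intro t htr
    have := Convex.norm_image_sub_le_of_norm_hasDerivWithin_le
      (f := fun u => f 0 u) (f' := fun u => ft 0 u) (s := Set.Ioo (-r) r) (C := Mft)
      (fun u hu => (hft ((0:ℝ), u) (hmemU 0 u h0r (abs_lt.2 ⟨by linarith [hu.1], hu.2⟩))).hasDerivWithinAt)
      (fun u hu => by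
        have h := hmemft 0 u h0r (abs_lt.2 ⟨by linarith [hu.1], hu.2⟩)
        have h2 := abs_sub_abs_le_abs_sub (ft 0 u) (ft 0 0)
        simp only [Real.norm_eq_abs]
        rw [hMftdef]; linarith)
      (convex_Ioo _ _) (abs_lt.1 h0r) (abs_lt.1 htr)
    simpa [Real.norm_eq_abs, hf0] using this
  -- Lipschitz and lower bound for g
  have hgK : ∀ s a b : ℝ, |s| < r → |a| < r → |b| < r → |g a s - g b s| ≤ K' * |a - b| := by
    intro s a b hsr har hbr
    have := hKlip (a, s) (hmemV a s har hsr) (b, s) (hmemV b s hbr hsr) rfl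
    calc |g a s - g b s| ≤ K * |a - b| := this
      _ ≤ K' * |a - b| := mul_le_mul_of_nonneg_right (le_max_left _ _) (abs_nonneg _)
  have hglo : ∀ a s : ℝ, |a| < r → |s| < r → 1 - ε ≤ g a s := by
    intro a s har hsr
    have := abs_lt.1 (hmemg a s har hsr)
    linarith [this.1]
  -- Continuity of x and y
  have hxc : ContinuousOn x (Set.Icc 0 T) := fun s hs => (hxd s hs).continuousWithinAt
  have hyc : ContinuousOn y (Set.Icc 0 T) := fun s hs => (hyd s hs).continuousWithinAt
  -- Small initial interval where both solutions stay in the ball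
  have hx00 : Filter.Tendsto x (𝓝[Set.Icc 0 T] 0) (𝓝 0) := by
    have := hxc 0 ⟨le_refl 0, hT.le⟩
    rwa [ContinuousWithinAt, hx0] at this
  have hy00 : Filter.Tendsto y (𝓝[Set.Icc 0 T] 0) (𝓝 0) := by
    have := hyc 0 ⟨le_refl 0, hT.le⟩
    rwa [ContinuousWithinAt, hy0] at this
  have hev : ∀ᶠ s in 𝓝[Set.Icc 0 T] 0, |x s| < r ∧ |y s| < r := by
    have h1 := hx00.eventually (eventually_abs_sub_lt (0:ℝ) hr)
    have h2 := hy00.eventually (eventually_abs_sub_lt (0:ℝ) hr)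
    filter_upwards [h1, h2] with s hs1 hs2
    rw [sub_zero] at hs1 hs2
    exact ⟨hs1, hs2⟩
  obtain ⟨O, hOopen, h0O, hOsub⟩ := mem_nhdsWithin.1 hev
  obtain ⟨δ, hδ, hballO⟩ := Metric.isOpen_iff.1 hOopen 0 h0O
  set t₀ : ℝ := min T (min (δ / 2) (r / 2)) with ht₀def
  have ht₀pos : 0 < t₀ := by
    rw [ht₀def]
    exact lt_min hT (lt_min (by linarith) (by linarith))
  have ht₀T : t₀ ≤ T := min_le_left _ _
  have hkey : ∀ s ∈ Set.Icc (0:ℝ) t₀, |x s| < r ∧ |y s| < r ∧ |s| < r ∧ s ∈ Set.Icc (0:ℝ) T := by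
    intro s hs
    have hsT : s ∈ Set.Icc (0:ℝ) T := ⟨hs.1, hs.2.trans ht₀T⟩
    have hsabs : |s| = s := abs_of_nonneg hs.1
    have hsr : |s| < r := by
      rw [hsabs]
      calc s ≤ t₀ := hs.2
        _ ≤ r / 2 := (min_le_right _ _).trans (min_le_right _ _)
        _ < r := by linarith
    have hsδ : s ∈ Metric.ball (0:ℝ) δ := by
      rw [Metric.mem_ball, Real.dist_eq, sub_zero, hsabs]
      calc s ≤ t₀ := hs.2
        _ ≤ δ / 2 := (min_le_right _ _).trans (min_le_left _ _)
        _ < δ := by linarith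
    have := hOsub ⟨hballO hsδ, hsT⟩
    exact ⟨this.1, this.2, hsr, hsT⟩
  -- FTC representations
  have hxftc : ∀ t ∈ Set.Icc (0:ℝ) T, x t = ∫ s in (0:ℝ)..t, x' s := by
    intro t ht
    have := ftc_aux15 hxd hx'c ht
    rwa [hx0, sub_zero] at this
  have hyftc : ∀ t ∈ Set.Icc (0:ℝ) T, y t = ∫ s in (0:ℝ)..t, y' s := by
    intro t ht
    have := ftc_aux15 hyd hy'c ht
    rwa [hy0, sub_zero] at this
  -- Bound on |y|
  set My : ℝ := sSup ((fun s => |y' s|) '' Set.Icc 0 T) with hMydef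
  have hMybdd : BddAbove ((fun s => |y' s|) '' Set.Icc 0 T) :=
    (isCompact_Icc.image_of_continuousOn hy'c.abs).bddAbove
  have hMy : ∀ s ∈ Set.Icc (0:ℝ) T, |y' s| ≤ My := fun s hs =>
    le_csSup hMybdd ⟨s, hs, rfl⟩
  have hMy0 : 0 ≤ My := le_trans (abs_nonneg _) (hMy 0 ⟨le_refl 0, hT.le⟩)
  have hybnd : ∀ t ∈ Set.Icc (0:ℝ) T, |y t| ≤ My * t := by
    intro t ht
    rw [hyftc t ht]
    have h := intervalIntegral.norm_integral_le_of_norm_le_const (a := 0) (b := t) (C := My)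
      (f := y') (fun s hs => by
        rw [Set.uIoc_of_le ht.1] at hs
        exact (Real.norm_eq_abs _).symm ▸ hMy s ⟨hs.1.le, hs.2.trans ht.2⟩)
    simpa [Real.norm_eq_abs, abs_of_nonneg ht.1] using h
  set C : ℝ := L₁ * My + Mft with hCdef
  have hC0 : 0 ≤ C := by positivity
  have hfy : ∀ t ∈ Set.Icc (0:ℝ) t₀, |f (y t) t| ≤ C * t := by
    intro t htm
    obtain ⟨hxr, hyr, htr, htT⟩ := hkey t htm
    have e1 : |f (y t) t| ≤ |f (y t) t - f 0 t| + |f 0 t| := by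
      have := abs_sub_abs_le_abs_sub (f (y t) t) (f 0 t)
      linarith [abs_nonneg (f 0 t), abs_sub (f (y t) t) (f 0 t)]
    have e2 : |f (y t) t - f 0 t| ≤ L₁ * |y t - 0| := hfL t (y t) 0 htr hyr h0r
    have e3 : |f 0 t| ≤ Mft * |t| := hf0t t htr
    have e4 : |y t| ≤ My * t := hybnd t htT
    rw [sub_zero] at e2
    rw [abs_of_nonneg htm.1] at e3
    calc |f (y t) t| ≤ |f (y t) t - f 0 t| + |f 0 t| := e1
      _ ≤ L₁ * (My * t) + Mft * t :=
        add_le_add (e2.trans (mul_le_mul_of_nonneg_left e4 hL₁0)) e3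
      _ = C * t := by rw [hCdef]; ring
  set C₂ : ℝ := C * K' / (1 - ε) ^ 2 with hC₂def
  have hC₂0 : 0 ≤ C₂ := by positivity
  -- The final small time
  set tstar : ℝ := min t₀ ((1 - q) / (2 * (C₂ + 1))) with htstardef
  have htstar0 : 0 < tstar := by
    rw [htstardef]
    exact lt_min ht₀pos (div_pos (by linarith) (by positivity))
  have htst₀ : tstar ≤ t₀ := min_le_left _ _
  have htsT : tstar ≤ T := htst₀.trans ht₀T
  have hα : q + C₂ * tstar ≤ (1 + q) / 2 := by
    have h1 : tstar ≤ (1 - q) / (2 * (C₂ + 1)) := min_le_right _ _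
    have h2 : C₂ * tstar ≤ C₂ * ((1 - q) / (2 * (C₂ + 1))) :=
      mul_le_mul_of_nonneg_left h1 hC₂0
    have h3 : C₂ * ((1 - q) / (2 * (C₂ + 1))) ≤ (1 - q) / 2 := by
      rw [mul_div_assoc']
      rw [div_le_div_iff₀ (by positivity) (by norm_num)]
      nlinarith
    linarith
  have hα1 : (1 + q) / 2 < 1 := by linarith
  -- The sup of |x' - y'|
  have hsubT : Set.Icc (0:ℝ) tstar ⊆ Set.Icc (0:ℝ) T := Set.Icc_subset_Icc_right htsT
  have hsubt₀ : Set.Icc (0:ℝ) tstar ⊆ Set.Icc (0:ℝ) t₀ := Set.Icc_subset_Icc_right htst₀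
  set N : ℝ := sSup ((fun s => |x' s - y' s|) '' Set.Icc 0 tstar) with hNdef
  have hNbdd : BddAbove ((fun s => |x' s - y' s|) '' Set.Icc 0 tstar) :=
    (isCompact_Icc.image_of_continuousOn
      (((hx'c.mono hsubT).sub (hy'c.mono hsubT)).abs)).bddAbove
  have hN : ∀ s ∈ Set.Icc (0:ℝ) tstar, |x' s - y' s| ≤ N := fun s hs =>
    le_csSup hNbdd ⟨s, hs, rfl⟩
  have hN0 : 0 ≤ N := le_trans (abs_nonneg _) (hN 0 ⟨le_refl 0, htstar0.le⟩)
  -- |x - y| ≤ N * s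
  have hw : ∀ s ∈ Set.Icc (0:ℝ) tstar, |x s - y s| ≤ N * s := by
    intro s hs
    have hsT := hsubT hs
    have hintx : IntervalIntegrable x' MeasureTheory.volume 0 s :=
      (hx'c.mono (Set.Icc_subset_Icc_right hsT.2)).intervalIntegrable_of_Icc hs.1
    have hinty : IntervalIntegrable y' MeasureTheory.volume 0 s :=
      (hy'c.mono (Set.Icc_subset_Icc_right hsT.2)).intervalIntegrable_of_Icc hs.1
    have h1 : x s - y s = ∫ u in (0:ℝ)..s, (x' u - y' u) := by
      rw [hxftc s hsT, hyftc s hsT, intervalIntegral.integral_sub hintx hinty]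
    rw [h1]
    have h := intervalIntegral.norm_integral_le_of_norm_le_const (a := 0) (b := s) (C := N)
      (f := fun u => x' u - y' u) (fun u hu => by
        rw [Set.uIoc_of_le hs.1] at hu
        exact (Real.norm_eq_abs _).symm ▸ hN u ⟨hu.1.le, hu.2.trans hs.2⟩)
    simpa [Real.norm_eq_abs, abs_of_nonneg hs.1] using h
  -- The main estimate on (0, tstar]
  have hmain : ∀ t ∈ Set.Ioc (0:ℝ) tstar, |x' t - y' t| ≤ (q + C₂ * tstar) * N := by
    intro t ht
    have htIcc : t ∈ Set.Icc (0:ℝ) tstar := ⟨ht.1.le, ht.2⟩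
    have ht₀m : t ∈ Set.Icc (0:ℝ) t₀ := hsubt₀ htIcc
    have htT : t ∈ Set.Ioc (0:ℝ) T := ⟨ht.1, ht.2.trans htsT⟩
    have hsub0t : Set.Icc (0:ℝ) t ⊆ Set.Icc (0:ℝ) t₀ := Set.Icc_subset_Icc_right ht₀m.2
    have hsub0ts : Set.Icc (0:ℝ) t ⊆ Set.Icc (0:ℝ) tstar := Set.Icc_subset_Icc_right ht.2
    have hgxcont : ContinuousOn (fun s => g (x s) s) (Set.Icc 0 t) := by
      apply hgc.comp (ContinuousOn.prodMk
        (hxc.mono (fun s hs => (hkey s (hsub0t hs)).2.2.2)) continuousOn_id)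
      intro s hs
      exact hmemU _ _ (hkey s (hsub0t hs)).1 (hkey s (hsub0t hs)).2.2.1
    have hgycont : ContinuousOn (fun s => g (y s) s) (Set.Icc 0 t) := by
      apply hgc.comp (ContinuousOn.prodMk
        (hyc.mono (fun s hs => (hkey s (hsub0t hs)).2.2.2)) continuousOn_id)
      intro s hs
      exact hmemU _ _ (hkey s (hsub0t hs)).2.1 (hkey s (hsub0t hs)).2.2.1
    have hIntx : IntervalIntegrable (fun s => g (x s) s) MeasureTheory.volume 0 t :=
      hgxcont.intervalIntegrable_of_Icc ht.1.le
    have hInty : IntervalIntegrable (fun s => g (y s) s) MeasureTheory.volume 0 t :=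
      hgycont.intervalIntegrable_of_Icc ht.1.le
    set Ix : ℝ := ∫ s in (0:ℝ)..t, g (x s) s with hIxdef
    set Iy : ℝ := ∫ s in (0:ℝ)..t, g (y s) s with hIydef
    have hconstint : IntervalIntegrable (fun _ : ℝ => (1 - ε)) MeasureTheory.volume 0 t :=
      intervalIntegrable_const
    have hIxlo : (1 - ε) * t ≤ Ix := by
      have h := intervalIntegral.integral_mono_on ht.1.le hconstint hIntx
        (fun s hs => hglo _ _ (hkey s (hsub0t hs)).1 (hkey s (hsub0t hs)).2.2.1)
      rwa [intervalIntegral.integral_const, sub_zero, smul_eq_mul, mul_comm] at h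
    have hIylo : (1 - ε) * t ≤ Iy := by
      have h := intervalIntegral.integral_mono_on ht.1.le hconstint hInty
        (fun s hs => hglo _ _ (hkey s (hsub0t hs)).2.1 (hkey s (hsub0t hs)).2.2.1)
      rwa [intervalIntegral.integral_const, sub_zero, smul_eq_mul, mul_comm] at h
    have hden : 0 < (1 - ε) * t := mul_pos h1ε ht.1
    have hIx0 : 0 < Ix := hden.trans_le hIxlo
    have hIy0 : 0 < Iy := hden.trans_le hIylo
    have hIdiff : |Iy - Ix| ≤ K' * (N * tstar) * t := by
      have hsplit : Iy - Ix = ∫ s in (0:ℝ)..t, (g (y s) s - g (x s) s) :=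
        (intervalIntegral.integral_sub hInty hIntx).symm
      rw [hsplit]
      have h := intervalIntegral.norm_integral_le_of_norm_le_const (a := 0) (b := t)
        (C := K' * (N * tstar)) (f := fun s => g (y s) s - g (x s) s) (fun s hs => by
          rw [Set.uIoc_of_le ht.1.le] at hs
          have hsIcc : s ∈ Set.Icc (0:ℝ) t := ⟨hs.1.le, hs.2⟩
          obtain ⟨hxr, hyr, hsr, hsT⟩ := hkey s (hsub0t hsIcc)
          have e1 : |g (y s) s - g (x s) s| ≤ K' * |y s - x s| := hgK s (y s) (x s) hsr hyr hxr
          have e2 : |y s - x s| ≤ N * s := by rw [abs_sub_comm]; exact hw s (hsub0ts hsIcc)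
          have e3 : N * s ≤ N * tstar :=
            mul_le_mul_of_nonneg_left ((hs.2).trans ht.2) hN0
          calc ‖g (y s) s - g (x s) s‖ = |g (y s) s - g (x s) s| := Real.norm_eq_abs _
            _ ≤ K' * (N * tstar) := e1.trans
              (mul_le_mul_of_nonneg_left (e2.trans e3) hK'0))
      simpa [Real.norm_eq_abs, abs_of_nonneg ht.1.le] using h
    -- decomposition of the difference of derivatives
    have hdecomp : x' t - y' t =
        (f (x t) t - f (y t) t) / Ix + f (y t) t * ((Iy - Ix) / (Ix * Iy)) := by
      rw [hxeq t htT, hyeq t htT, ← hIxdef, ← hIydef]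
      field_simp
      ring
    obtain ⟨hxtr, hytr, httr, htTm⟩ := hkey t ht₀m
    have hterm1 : |(f (x t) t - f (y t) t) / Ix| ≤ (L₁ * (N * t)) / ((1 - ε) * t) := by
      rw [abs_div, abs_of_pos hIx0]
      apply div_le_div₀ (mul_nonneg hL₁0 (mul_nonneg hN0 ht.1.le)) _ hden hIxlo
      calc |f (x t) t - f (y t) t| ≤ L₁ * |x t - y t| := hfL t (x t) (y t) httr hxtr hytr
        _ ≤ L₁ * (N * t) := mul_le_mul_of_nonneg_left (hw t htIcc) hL₁0
    have hterm2 : |f (y t) t * ((Iy - Ix) / (Ix * Iy))| ≤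
        (C * t) * ((K' * (N * tstar) * t) / (((1 - ε) * t) * ((1 - ε) * t))) := by
      rw [abs_mul, abs_div, abs_of_pos (mul_pos hIx0 hIy0)]
      apply mul_le_mul (hfy t ht₀m) _
        (div_nonneg (abs_nonneg _) (mul_pos hIx0 hIy0).le) (mul_nonneg hC0 ht.1.le)
      apply div_le_div₀ (mul_nonneg (mul_nonneg hK'0 (mul_nonneg hN0 htstar0.le)) ht.1.le)
        hIdiff (mul_pos hden hden)
      exact mul_le_mul hIxlo hIylo hden.le hIx0.le
    have htne : t ≠ 0 := ht.1.ne'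
    have halg : (L₁ * (N * t)) / ((1 - ε) * t) +
        (C * t) * ((K' * (N * tstar) * t) / (((1 - ε) * t) * ((1 - ε) * t)))
        = q * N + C₂ * tstar * N := by
      rw [hqdef, hC₂def]
      field_simp
    calc |x' t - y' t| = |(f (x t) t - f (y t) t) / Ix + f (y t) t * ((Iy - Ix) / (Ix * Iy))| := by
          rw [hdecomp]
      _ ≤ |(f (x t) t - f (y t) t) / Ix| + |f (y t) t * ((Iy - Ix) / (Ix * Iy))| := abs_add_le _ _
      _ ≤ (L₁ * (N * t)) / ((1 - ε) * t) +
          (C * t) * ((K' * (N * tstar) * t) / (((1 - ε) * t) * ((1 - ε) * t))) :=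
          add_le_add hterm1 hterm2
      _ = q * N + C₂ * tstar * N := halg
      _ = (q + C₂ * tstar) * N := by ring
  -- Extend the estimate to t = 0 by continuity
  have h0bound : |x' 0 - y' 0| ≤ (q + C₂ * tstar) * N := by
    have hcont0 : ContinuousWithinAt (fun s => |x' s - y' s|) (Set.Icc 0 T) 0 :=
      ((hx'c.sub hy'c).abs) 0 ⟨le_refl 0, hT.le⟩
    have hIocsub : Set.Ioc (0:ℝ) tstar ⊆ Set.Icc (0:ℝ) T := fun s hs =>
      ⟨hs.1.le, hs.2.trans htsT⟩
    have htend : Filter.Tendsto (fun s => |x' s - y' s|) (𝓝[Set.Ioc 0 tstar] 0)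
        (𝓝 |x' 0 - y' 0|) := hcont0.mono hIocsub
    haveI : (𝓝[Set.Ioc (0:ℝ) tstar] (0:ℝ)).NeBot := left_nhdsWithin_Ioc_neBot htstar0
    exact le_of_tendsto htend
      (Filter.eventually_of_mem self_mem_nhdsWithin fun s hs => hmain s hs)
  -- N ≤ α N with α < 1, hence N = 0
  have hNle : N ≤ (q + C₂ * tstar) * N := by
    rw [hNdef]
    apply csSup_le (Set.Nonempty.image _ (Set.nonempty_Icc.mpr htstar0.le))
    rintro v ⟨s, hs, rfl⟩
    rcases eq_or_lt_of_le hs.1 with h | h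
    · rw [← h]; exact h0bound
    · exact hmain s ⟨h, hs.2⟩
  have hNzero : N = 0 := by nlinarith
  refine ⟨tstar, ⟨htstar0, htsT⟩, fun t htm => ?_⟩
  have h := hw t htm
  rw [hNzero, zero_mul] at h
  exact sub_eq_zero.mp (abs_eq_zero.mp (le_antisymm h (abs_nonneg _)))
end

section
/- Let f, g : ℝ × ℝ → ℝ satisfy f(0,0) = 0, g(0,0) = 1, with f_x, f_t continuous near (0,0), g continuous and locally Lipschitz in x, and θ := f_x(0,0) < 0. If x, y are continuous on [0,T], C¹ on (0,T], and both solve z(0)=0, z'(t) = f(z(t),t)/∫₀ᵗ g(z(s),s) ds on (0,T], then there exists t* ∈ (0,T] with x = y on [0,t*]. -/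
/-!
Near the origin `f_x ≤ -κ < 0`, `g` is close to `1` and `f` is close to `0`. Suppose `|x - y|`
attains its maximum `m > 0` over a short interval `[0, τ]` at `s`, say with `x s - y s = m`. Then
`(x - y)'(s) ≥ 0`. On the other hand, with `I_z = ∫₀ˢ g(z u, u) du ∈ [s/2, 2s]` and
`|I_x - I_y| ≤ K m s` by the Lipschitz bound on `g`, the mean value theorem gives
`(x - y)'(s) = (f(x s, s) - f(y s, s)) / I_x + f(y s, s) (I_y - I_x) / (I_x I_y)
  ≤ -κ m / (2 s) + κ m / (4 s) < 0`.
-/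

open Set Filter intervalIntegral Topology

theorem IsMaxOn.hasDerivAt_nonneg_of_Icc {w : ℝ → ℝ} {a b w' : ℝ} (h : IsMaxOn w (Icc a b) b)
    (hab : a < b) (hw : HasDerivAt w w' b) : 0 ≤ w' := by
  have hcone : a - b ∈ posTangentConeAt (Icc a b) b :=
    sub_mem_posTangentConeAt_of_segment_subset (by rw [segment_symm, segment_eq_Icc hab.le])
  have := h.localize.hasFDerivWithinAt_nonpos hw.hasDerivWithinAt.hasFDerivWithinAt hcone
  rw [ContinuousLinearMap.toSpanSingleton_apply, smul_eq_mul] at this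
  exact nonneg_of_mul_nonpos_right this (sub_neg.2 hab)

theorem div_sub_div_neg {κ K m s A B I J : ℝ} (hκ : 0 < κ) (hK : 0 < K) (hm : 0 < m)
    (hs : 0 < s) (hAB : A - B ≤ -κ * m) (hI : s / 2 ≤ I) (hI' : I ≤ 2 * s) (hJ : s / 2 ≤ J)
    (hIJ : |J - I| ≤ K * m * s) (hB : |B| ≤ κ / (16 * K)) : A / I - B / J < 0 := by
  have hI0 : 0 < I := by linarith
  have hJ0 : 0 < J := by linarith
  have hsplit : A / I - B / J = (A - B) / I + B * (J - I) / (I * J) := by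
    field_simp; ring
  have hcontract : (A - B) / I ≤ -κ * m / (2 * s) := by
    rw [div_le_div_iff₀ hI0 (by positivity)]
    nlinarith [mul_pos hκ hm]
  have hperturb : B * (J - I) / (I * J) ≤ κ * m / (4 * s) :=
    calc B * (J - I) / (I * J) ≤ |B| * |J - I| / (s / 2 * (s / 2)) := by
          rw [← abs_mul]
          exact div_le_div₀ (abs_nonneg _) (le_abs_self _) (by positivity)
            (mul_le_mul hI hJ (by positivity) hI0.le)
      _ ≤ κ / (16 * K) * (K * m * s) / (s / 2 * (s / 2)) := by gcongr
      _ = κ * m / (4 * s) := by field_simp; ring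
  have hpos : 0 < κ * m / (4 * s) := by positivity
  have hhalf : -κ * m / (2 * s) = -2 * (κ * m / (4 * s)) := by field_simp; ring
  linarith

structure ContractionRegion (f g fx : ℝ → ℝ → ℝ) (κ K : ℝ) (S : Set (ℝ × ℝ)) : Prop where
  convex : Convex ℝ S
  hasDerivAt_fx : ∀ p ∈ S, HasDerivAt (fun a => f a p.2) (fx p.1 p.2) p.1
  fx_le : ∀ p ∈ S, fx p.1 p.2 ≤ -κ
  -- makes the perturbation term at most half of the contraction term in `div_sub_div_neg`
  abs_f_le : ∀ p ∈ S, |f p.1 p.2| ≤ κ / (16 * K)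
  g_mem : ∀ p ∈ S, g p.1 p.2 ∈ Icc (1 / 2 : ℝ) 2
  continuousOn_g : ContinuousOn (fun p : ℝ × ℝ => g p.1 p.2) S
  lipschitz_g : ∀ p ∈ S, ∀ q ∈ S, p.2 = q.2 → |g p.1 p.2 - g q.1 q.2| ≤ K * |p.1 - q.1|

namespace ContractionRegion

variable {f g fx : ℝ → ℝ → ℝ} {κ K : ℝ} {S : Set (ℝ × ℝ)}

theorem sub_le (hR : ContractionRegion f g fx κ K S) {X Y t : ℝ} (hX : (X, t) ∈ S)
    (hY : (Y, t) ∈ S) (hYX : Y ≤ X) : f X t - f Y t ≤ -κ * (X - Y) := by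
  have hfiber : ∀ a ∈ Icc Y X, (a, t) ∈ S := fun a ha =>
    hR.convex.segment_subset hY hX <| by
      rw [← Prod.image_mk_segment_left, segment_eq_Icc hYX]
      exact mem_image_of_mem _ ha
  have hderiv : ∀ a ∈ Icc Y X, HasDerivAt (fun a => f a t) (fx a t) a := fun a ha =>
    hR.hasDerivAt_fx _ (hfiber a ha)
  refine (convex_Icc Y X).image_sub_le_mul_sub_of_deriv_le
    (fun a ha => (hderiv a ha).continuousAt.continuousWithinAt)
    (fun a ha => (hderiv a (interior_subset ha)).differentiableAt.differentiableWithinAt)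
    (fun a ha => ?_) Y (left_mem_Icc.2 hYX) X (right_mem_Icc.2 hYX) hYX
  rw [(hderiv a (interior_subset ha)).deriv]
  exact hR.fx_le _ (hfiber a (interior_subset ha))

variable {z w : ℝ → ℝ} {s : ℝ}

theorem intervalIntegrable_comp (hR : ContractionRegion f g fx κ K S) (hs : 0 ≤ s)
    (hz : ContinuousOn z (Icc 0 s)) (hzS : MapsTo (fun u => (z u, u)) (Icc 0 s) S) :
    IntervalIntegrable (fun u => g (z u) u) MeasureTheory.volume 0 s := by
  refine ContinuousOn.intervalIntegrable ?_
  rw [uIcc_of_le hs]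
  exact hR.continuousOn_g.comp (hz.prodMk continuousOn_id) hzS

theorem integral_mem_Icc (hR : ContractionRegion f g fx κ K S) (hs : 0 ≤ s)
    (hz : ContinuousOn z (Icc 0 s)) (hzS : MapsTo (fun u => (z u, u)) (Icc 0 s) S) :
    ∫ u in (0 : ℝ)..s, g (z u) u ∈ Icc (s / 2) (2 * s) := by
  have hint := hR.intervalIntegrable_comp hs hz hzS
  have hg u (hu : u ∈ Icc 0 s) := hR.g_mem _ (hzS hu)
  constructor
  · have := integral_mono_on hs intervalIntegrable_const hint fun u hu => (hg u hu).1
    simpa [div_eq_mul_inv, mul_comm] using this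
  · have := integral_mono_on hs hint intervalIntegrable_const fun u hu => (hg u hu).2
    simpa [mul_comm] using this

theorem abs_integral_sub_le (hR : ContractionRegion f g fx κ K S) (hs : 0 ≤ s)
    (hz : ContinuousOn z (Icc 0 s)) (hzS : MapsTo (fun u => (z u, u)) (Icc 0 s) S)
    (hw : ContinuousOn w (Icc 0 s)) (hwS : MapsTo (fun u => (w u, u)) (Icc 0 s) S) {m : ℝ}
    (hK : 0 ≤ K) (hzw : ∀ u ∈ Icc 0 s, |z u - w u| ≤ m) :
    |(∫ u in (0 : ℝ)..s, g (z u) u) - ∫ u in (0 : ℝ)..s, g (w u) u| ≤ K * m * s := by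
  rw [← integral_sub (hR.intervalIntegrable_comp hs hz hzS) (hR.intervalIntegrable_comp hs hw hwS)]
  have := norm_integral_le_of_norm_le_const (a := 0) (b := s) (C := K * m)
    (f := fun u => g (z u) u - g (w u) u) fun u hu => by
      rw [uIoc_of_le hs] at hu
      have hu' : u ∈ Icc 0 s := Ioc_subset_Icc_self hu
      exact (hR.lipschitz_g _ (hzS hu') _ (hwS hu') rfl).trans
        (mul_le_mul_of_nonneg_left (hzw u hu') hK)
  simpa [abs_of_nonneg hs] using this

theorem sub_nonpos_of_isMaxOn (hR : ContractionRegion f g fx κ K S) (hκ : 0 < κ) (hK : 0 < K)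
    (hs : 0 < s) (hz : ContinuousOn z (Icc 0 s)) (hzS : MapsTo (fun u => (z u, u)) (Icc 0 s) S)
    (hw : ContinuousOn w (Icc 0 s)) (hwS : MapsTo (fun u => (w u, u)) (Icc 0 s) S)
    (hzd : HasDerivAt z (f (z s) s / ∫ u in (0 : ℝ)..s, g (z u) u) s)
    (hwd : HasDerivAt w (f (w s) s / ∫ u in (0 : ℝ)..s, g (w u) u) s)
    (hmax : IsMaxOn (fun u => |z u - w u|) (Icc 0 s) s) : z s - w s ≤ 0 := by
  by_contra! hm
  have hdist : ∀ u ∈ Icc 0 s, |z u - w u| ≤ z s - w s := fun u hu =>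
    (hmax hu).trans_eq (abs_of_pos hm)
  have hsS : s ∈ Icc 0 s := right_mem_Icc.2 hs.le
  have hIz := hR.integral_mem_Icc hs.le hz hzS
  have hIw := hR.integral_mem_Icc hs.le hw hwS
  have hderiv : 0 ≤ f (z s) s / (∫ u in (0 : ℝ)..s, g (z u) u) -
      f (w s) s / ∫ u in (0 : ℝ)..s, g (w u) u :=
    IsMaxOn.hasDerivAt_nonneg_of_Icc (fun u hu => (le_abs_self _).trans (hdist u hu)) hs
      (hzd.sub hwd)
  refine hderiv.not_gt
    (div_sub_div_neg hκ hK hm hs ?_ hIz.1 hIz.2 hIw.1 ?_ (hR.abs_f_le _ (hwS hsS)))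
  · exact hR.sub_le (hzS hsS) (hwS hsS) (sub_nonneg.1 hm.le)
  · exact hR.abs_integral_sub_le hs.le hw hwS hz hzS hK.le fun u hu => by
      rw [abs_sub_comm]; exact hdist u hu

theorem eqOn_Icc (hR : ContractionRegion f g fx κ K S) (hκ : 0 < κ) (hK : 0 < K) {τ : ℝ}
    (hτ : 0 ≤ τ) (hz : ContinuousOn z (Icc 0 τ)) (hzS : MapsTo (fun u => (z u, u)) (Icc 0 τ) S)
    (hw : ContinuousOn w (Icc 0 τ)) (hwS : MapsTo (fun u => (w u, u)) (Icc 0 τ) S)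
    (hzd : ∀ t ∈ Ioc 0 τ, HasDerivAt z (f (z t) t / ∫ u in (0 : ℝ)..t, g (z u) u) t)
    (hwd : ∀ t ∈ Ioc 0 τ, HasDerivAt w (f (w t) t / ∫ u in (0 : ℝ)..t, g (w u) u) t)
    (h0 : z 0 = w 0) : EqOn z w (Icc 0 τ) := by
  have hcont : ContinuousOn (fun u => |z u - w u|) (Icc 0 τ) := (hz.sub hw).abs
  obtain ⟨s, hs, hmax⟩ := isCompact_Icc.exists_isMaxOn (nonempty_Icc.2 hτ) hcont
  suffices hzws : z s = w s by
    intro t ht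
    have : |z t - w t| ≤ |z s - w s| := hmax ht
    rw [hzws, sub_self, abs_zero] at this
    exact sub_eq_zero.1 (abs_nonpos_iff.1 this)
  rcases hs.1.eq_or_lt with rfl | hs0
  · exact h0
  have hsub : Icc 0 s ⊆ Icc 0 τ := Icc_subset_Icc_right hs.2
  have hsd : s ∈ Ioc 0 τ := ⟨hs0, hs.2⟩
  have hzw := hR.sub_nonpos_of_isMaxOn hκ hK hs0 (hz.mono hsub) (hzS.mono_left hsub)
    (hw.mono hsub) (hwS.mono_left hsub) (hzd s hsd) (hwd s hsd) (hmax.on_subset hsub)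
  have hwz := hR.sub_nonpos_of_isMaxOn hκ hK hs0 (hw.mono hsub) (hwS.mono_left hsub)
    (hz.mono hsub) (hzS.mono_left hsub) (hwd s hsd) (hzd s hsd)
    (by simpa only [abs_sub_comm] using hmax.on_subset hsub)
  linarith

end ContractionRegion

theorem exists_closedBall_contractionRegion {f g fx : ℝ → ℝ → ℝ} {U : Set (ℝ × ℝ)}
    (hU : IsOpen U) (h0U : ((0 : ℝ), (0 : ℝ)) ∈ U) (hf0 : f 0 0 = 0) (hg0 : g 0 0 = 1)
    (hfc : ContinuousOn (fun p : ℝ × ℝ => f p.1 p.2) U)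
    (hfx : ∀ p ∈ U, HasDerivAt (fun x => f x p.2) (fx p.1 p.2) p.1)
    (hfxc : ContinuousOn (fun p : ℝ × ℝ => fx p.1 p.2) U)
    (hgc : ContinuousOn (fun p : ℝ × ℝ => g p.1 p.2) U)
    (hglip : ∀ p ∈ U, ∃ K : ℝ, ∃ V ∈ nhds p, ∀ q ∈ V, ∀ q' ∈ V,
      (q : ℝ × ℝ).2 = (q' : ℝ × ℝ).2 → |g q.1 q.2 - g q'.1 q'.2| ≤ K * |q.1 - q'.1|)
    (hθ : fx 0 0 < 0) :
    ∃ r > 0, ∃ K > 0,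
      ContractionRegion f g fx (-fx 0 0 / 2) K (Metric.closedBall ((0 : ℝ), (0 : ℝ)) r) := by
  obtain ⟨K, V, hV, hK⟩ := hglip _ h0U
  have hU0 : U ∈ 𝓝 ((0 : ℝ), (0 : ℝ)) := hU.mem_nhds h0U
  have hε : 0 < -fx 0 0 / 2 / (16 * max K 1) := div_pos (by linarith) (by positivity)
  have hev : ∀ᶠ p : ℝ × ℝ in 𝓝 (0, 0), (p ∈ U ∧ p ∈ V) ∧ fx p.1 p.2 ≤ -(-fx 0 0 / 2) ∧
      |f p.1 p.2| ≤ -fx 0 0 / 2 / (16 * max K 1) ∧ g p.1 p.2 ∈ Icc (1 / 2 : ℝ) 2 := by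
    filter_upwards [hU0, hV,
      (hfxc.continuousAt hU0).eventually (Iic_mem_nhds (show fx 0 0 < -(-fx 0 0 / 2) by linarith)),
      (hfc.continuousAt hU0).abs.eventually
        (Iic_mem_nhds (show |f 0 0| < _ by rwa [hf0, abs_zero])),
      (hgc.continuousAt hU0).eventually
        (Icc_mem_nhds (show 1 / 2 < g 0 0 by norm_num [hg0]) (show g 0 0 < 2 by norm_num [hg0]))]
      with p hpU hpV hfxp hfp hgp
    exact ⟨⟨hpU, hpV⟩, hfxp, hfp, hgp⟩
  obtain ⟨r, hr, hball⟩ := Metric.nhds_basis_closedBall.eventually_iff.1 hev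
  refine ⟨r, hr, max K 1, by positivity, convex_closedBall _ _,
    fun p hp => hfx p (hball hp).1.1, fun p hp => (hball hp).2.1, fun p hp => (hball hp).2.2.1,
    fun p hp => (hball hp).2.2.2, hgc.mono fun p hp => (hball hp).1.1,
    fun p hp q hq hpq => (hK p (hball hp).1.2 q (hball hq).1.2 hpq).trans ?_⟩
  gcongr
  exact le_max_left _ _

theorem eventually_mem_closedBall_of_continuousOn {z : ℝ → ℝ} {T r : ℝ} (hT : 0 < T)
    (hr : 0 < r) (hz0 : z 0 = 0) (hz : ContinuousOn z (Icc 0 T)) :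
    ∀ᶠ u in 𝓝[≥] (0 : ℝ), (z u, u) ∈ Metric.closedBall ((0 : ℝ), (0 : ℝ)) r := by
  have hcurve : ContinuousWithinAt (fun u => (z u, u)) (Icc 0 T) 0 :=
    (hz 0 (left_mem_Icc.2 hT.le)).prodMk continuousWithinAt_id
  rw [ContinuousWithinAt, nhdsWithin_Icc_eq_nhdsGE hT, hz0] at hcurve
  exact hcurve (Metric.closedBall_mem_nhds _ hr)

theorem stmt_16_general (f g fx : ℝ → ℝ → ℝ)
    (U : Set (ℝ × ℝ)) (hU : IsOpen U) (h0U : ((0:ℝ), (0:ℝ)) ∈ U)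
    (hf0 : f 0 0 = 0) (hg0 : g 0 0 = 1)
    (hfc : ContinuousOn (fun p : ℝ × ℝ => f p.1 p.2) U)
    (hfx : ∀ p ∈ U, HasDerivAt (fun x => f x p.2) (fx p.1 p.2) p.1)
    (hfxc : ContinuousOn (fun p : ℝ × ℝ => fx p.1 p.2) U)
    (hgc : ContinuousOn (fun p : ℝ × ℝ => g p.1 p.2) U)
    (hglip : ∀ p ∈ U, ∃ K : ℝ, ∃ V ∈ nhds p, ∀ q ∈ V, ∀ q' ∈ V,
      (q : ℝ × ℝ).2 = (q' : ℝ × ℝ).2 → |g q.1 q.2 - g q'.1 q'.2| ≤ K * |q.1 - q'.1|)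
    (hθ : fx 0 0 < 0)
    (T : ℝ) (hT : 0 < T) (x y : ℝ → ℝ)
    -- x, y ∈ C[0,T] ∩ C¹(0,T] solve the singular integro-differential equation
    (hx0 : x 0 = 0) (hxc : ContinuousOn x (Set.Icc 0 T))
    (hxd : ∀ t ∈ Set.Ioc (0:ℝ) T,
      HasDerivAt x (f (x t) t / ∫ s in (0:ℝ)..t, g (x s) s) t)
    (hy0 : y 0 = 0) (hyc : ContinuousOn y (Set.Icc 0 T))
    (hyd : ∀ t ∈ Set.Ioc (0:ℝ) T,
      HasDerivAt y (f (y t) t / ∫ s in (0:ℝ)..t, g (y s) s) t) :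
    ∃ tstar ∈ Set.Ioc (0:ℝ) T, ∀ t ∈ Set.Icc (0:ℝ) tstar, x t = y t := by
  obtain ⟨r, hr, K, hK, hR⟩ :=
    exists_closedBall_contractionRegion hU h0U hf0 hg0 hfc hfx hfxc hgc hglip hθ
  obtain ⟨τ, hτ, hball⟩ := mem_nhdsGE_iff_exists_Icc_subset.1
    ((eventually_mem_closedBall_of_continuousOn hT hr hx0 hxc).and
      (eventually_mem_closedBall_of_continuousOn hT hr hy0 hyc))
  set tstar := min τ T
  have htstar : tstar ∈ Ioc 0 T := ⟨lt_min hτ hT, min_le_right _ _⟩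
  have hIcc : Icc 0 tstar ⊆ Icc 0 T := Icc_subset_Icc_right htstar.2
  have hIoc : Ioc 0 tstar ⊆ Ioc 0 T := Ioc_subset_Ioc_right htstar.2
  have hτsub : Icc 0 tstar ⊆ Icc 0 τ := Icc_subset_Icc_right (min_le_left _ _)
  exact ⟨tstar, htstar, hR.eqOn_Icc (by linarith) hK htstar.1.le (hxc.mono hIcc)
    (fun u hu => (hball (hτsub hu)).1) (hyc.mono hIcc) (fun u hu => (hball (hτsub hu)).2)
    (fun t ht => hxd t (hIoc ht)) (fun t ht => hyd t (hIoc ht)) (hx0.trans hy0.symm)⟩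

theorem stmt_16 (f g fx ft : ℝ → ℝ → ℝ)
    (U : Set (ℝ × ℝ)) (hU : IsOpen U) (h0U : ((0:ℝ), (0:ℝ)) ∈ U)
    (hf0 : f 0 0 = 0) (hg0 : g 0 0 = 1)
    (hfc : ContinuousOn (fun p : ℝ × ℝ => f p.1 p.2) U)
    (hfx : ∀ p ∈ U, HasDerivAt (fun x => f x p.2) (fx p.1 p.2) p.1)
    (hft : ∀ p ∈ U, HasDerivAt (fun t => f p.1 t) (ft p.1 p.2) p.2)
    (hfxc : ContinuousOn (fun p : ℝ × ℝ => fx p.1 p.2) U)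
    (hftc : ContinuousOn (fun p : ℝ × ℝ => ft p.1 p.2) U)
    (hgc : ContinuousOn (fun p : ℝ × ℝ => g p.1 p.2) U)
    (hglip : ∀ p ∈ U, ∃ K : ℝ, ∃ V ∈ nhds p, ∀ q ∈ V, ∀ q' ∈ V,
      (q : ℝ × ℝ).2 = (q' : ℝ × ℝ).2 → |g q.1 q.2 - g q'.1 q'.2| ≤ K * |q.1 - q'.1|)
    (hθ : fx 0 0 < 0)
    (T : ℝ) (hT : 0 < T) (x y : ℝ → ℝ)
    -- x, y ∈ C[0,T] ∩ C¹(0,T] solve the singular integro-differential equation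
    (hx0 : x 0 = 0) (hxc : ContinuousOn x (Set.Icc 0 T))
    (hxd : ∀ t ∈ Set.Ioc (0:ℝ) T,
      HasDerivAt x (f (x t) t / ∫ s in (0:ℝ)..t, g (x s) s) t)
    (hy0 : y 0 = 0) (hyc : ContinuousOn y (Set.Icc 0 T))
    (hyd : ∀ t ∈ Set.Ioc (0:ℝ) T,
      HasDerivAt y (f (y t) t / ∫ s in (0:ℝ)..t, g (y s) s) t) :
    ∃ tstar ∈ Set.Ioc (0:ℝ) T, ∀ t ∈ Set.Icc (0:ℝ) tstar, x t = y t :=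
  stmt_16_general f g fx U hU h0U hf0 hg0 hfc hfx hfxc hgc hglip hθ T hT x y hx0 hxc hxd hy0 hyc hyd
end

section
/- Let K₁, K₂ > 0, σ̄ ∈ (0,1), λ > 0, and K > 0 with e^{-√λ K} = σ̄/3. Then for all sufficiently large R, for any measurable function μ : [0,R] → [K₁,K₂] and with σ(ρ) = (R/sinh(√λ R))·(sinh(√λ ρ)/ρ), one has ∫₀ᴿ μ(ρ)(σ(ρ) - σ̄)ρ² dρ < 0. -/
/-!
Write `a = √l`. Since `σ(ρ) ρ² = R ρ sinh(aρ) / sinh(aR) ≤ R² sinh(aρ) / sinh(aR)` on `[0, R]` and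
`∫₀ᴿ sinh(aρ) dρ = (cosh(aR) - 1) / a < sinh(aR) / a`, the positive part of the integral is less
than `K₂ R² / a`, while the negative part is at least `K₁ σ̄ R³ / 3`. The cubic term wins as soon
as `R ≥ 3 K₂ / (a K₁ σ̄)`.
-/

open Real Set Filter MeasureTheory intervalIntegral

theorem integral_sinh_mul {a : ℝ} (ha : a ≠ 0) (R : ℝ) :
    ∫ ρ in (0:ℝ)..R, sinh (a * ρ) = (cosh (a * R) - 1) / a := by
  have hderiv : ∀ ρ ∈ uIcc 0 R, HasDerivAt (fun ρ => cosh (a * ρ) / a) (sinh (a * ρ)) ρ :=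
    fun ρ _ => by simpa [ha] using ((hasDerivAt_id ρ).const_mul a).cosh.div_const a
  rw [integral_eq_sub_of_hasDerivAt hderiv (Continuous.intervalIntegrable (by fun_prop) _ _)]
  simp [sub_div]

theorem cosh_sub_one_lt_sinh {x : ℝ} (hx : 0 < x) : cosh x - 1 < sinh x := by
  have : exp (-x) < 1 := exp_lt_one_iff.mpr (neg_neg_of_pos hx)
  linarith [cosh_sub_sinh x]

theorem integral_mul_sinh_mul_lt {a R : ℝ} (ha : 0 < a) (hR : 0 < R) :
    ∫ ρ in (0:ℝ)..R, ρ * sinh (a * ρ) < R * sinh (a * R) / a := by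
  calc ∫ ρ in (0:ℝ)..R, ρ * sinh (a * ρ)
      ≤ ∫ ρ in (0:ℝ)..R, R * sinh (a * ρ) := by
        refine integral_mono_on hR.le (Continuous.intervalIntegrable (by fun_prop) _ _)
          (Continuous.intervalIntegrable (by fun_prop) _ _) fun ρ ⟨hρ0, hρR⟩ => ?_
        exact mul_le_mul_of_nonneg_right hρR (sinh_nonneg_iff.mpr (by positivity))
    _ = R * ((cosh (a * R) - 1) / a) := by
        rw [intervalIntegral.integral_const_mul, integral_sinh_mul ha.ne']
    _ < R * (sinh (a * R) / a) := by
        gcongr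
        exact cosh_sub_one_lt_sinh (by positivity)
    _ = R * sinh (a * R) / a := by ring

theorem integral_mul_sub_mul_sq_le {μ φ : ℝ → ℝ} {K₁ K₂ c R : ℝ} (hR : 0 ≤ R) (hc : 0 ≤ c)
    (hμ : Measurable μ) (hμb : ∀ ρ ∈ Icc 0 R, K₁ ≤ μ ρ ∧ μ ρ ≤ K₂)
    (hφ : Continuous φ) (hφ0 : ∀ ρ ∈ Icc 0 R, 0 ≤ φ ρ) :
    ∫ ρ in (0:ℝ)..R, μ ρ * (φ ρ - c * ρ ^ 2)
      ≤ K₂ * (∫ ρ in (0:ℝ)..R, φ ρ) - K₁ * c * (R ^ 3 / 3) := by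
  have hμint : IntervalIntegrable μ volume 0 R := by
    rw [intervalIntegrable_iff_integrableOn_Icc_of_le hR]
    refine Measure.integrableOn_of_bounded (M := max |K₁| |K₂|) measure_Icc_lt_top.ne
      hμ.aestronglyMeasurable ?_
    filter_upwards [ae_restrict_mem measurableSet_Icc] with ρ hρ
    exact abs_le_max_abs_abs (hμb ρ hρ).1 (hμb ρ hρ).2
  calc ∫ ρ in (0:ℝ)..R, μ ρ * (φ ρ - c * ρ ^ 2)
      ≤ ∫ ρ in (0:ℝ)..R, (K₂ * φ ρ - K₁ * c * ρ ^ 2) := by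
        refine integral_mono_on hR (hμint.mul_continuousOn (by fun_prop))
          (Continuous.intervalIntegrable (by fun_prop) _ _) fun ρ hρ => ?_
        obtain ⟨hK₁, hK₂⟩ := hμb ρ hρ
        nlinarith [mul_le_mul_of_nonneg_right hK₂ (hφ0 ρ hρ),
          mul_le_mul_of_nonneg_right hK₁ (mul_nonneg hc (sq_nonneg ρ))]
    _ = K₂ * (∫ ρ in (0:ℝ)..R, φ ρ) - K₁ * c * (R ^ 3 / 3) := by
        rw [intervalIntegral.integral_sub (Continuous.intervalIntegrable (by fun_prop) _ _)
            (Continuous.intervalIntegrable (by fun_prop) _ _),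
          intervalIntegral.integral_const_mul, intervalIntegral.integral_const_mul, integral_pow]
        ring

theorem stmt_18_general (K₁ K₂ σbar l : ℝ) (hK₁ : 0 < K₁) (hK₂ : 0 < K₂)
    (hσ : σbar ∈ Set.Ioo (0:ℝ) 1) (hl : 0 < l) :
    ∃ R₁ : ℝ, ∀ R ≥ R₁, ∀ μ : ℝ → ℝ, Measurable μ →
      (∀ ρ ∈ Set.Icc (0:ℝ) R, K₁ ≤ μ ρ ∧ μ ρ ≤ K₂) →
      (∫ ρ in (0:ℝ)..R,
        μ ρ * ((R / Real.sinh (Real.sqrt l * R)) * (Real.sinh (Real.sqrt l * ρ) / ρ) - σbar)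
          * ρ ^ 2) < 0 := by
  set a := √l
  have ha : 0 < a := sqrt_pos.mpr hl
  have hσ0 : 0 < σbar := hσ.1
  refine ⟨3 * K₂ / (a * K₁ * σbar), fun R hR μ hμ hμb => ?_⟩
  have hR0 : 0 < R := lt_of_lt_of_le (by positivity) hR
  have hsinh : 0 < sinh (a * R) := sinh_pos_iff.mpr (by positivity)
  set s := R / sinh (a * R)
  -- `sinh (a * ρ) / ρ * ρ ^ 2 = ρ * sinh (a * ρ)` holds at `ρ = 0` too, where `x / 0 = 0`.
  have hintegrand : ∀ ρ, μ ρ * (s * (sinh (a * ρ) / ρ) - σbar) * ρ ^ 2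
      = μ ρ * (s * (ρ * sinh (a * ρ)) - σbar * ρ ^ 2) := by
    intro ρ
    rcases eq_or_ne ρ 0 with rfl | hρ
    · simp
    · field_simp
  have hmass : K₂ * ∫ ρ in (0:ℝ)..R, s * (ρ * sinh (a * ρ)) < K₂ * (R ^ 2 / a) := by
    rw [intervalIntegral.integral_const_mul]
    calc K₂ * (s * ∫ ρ in (0:ℝ)..R, ρ * sinh (a * ρ))
        < K₂ * (s * (R * sinh (a * R) / a)) := by
          gcongr
          exact integral_mul_sinh_mul_lt ha hR0
      _ = K₂ * (R ^ 2 / a) := by simp only [s]; field_simp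
  have hRbound : K₂ * (R ^ 2 / a) ≤ K₁ * σbar * (R ^ 3 / 3) := by
    rw [ge_iff_le, div_le_iff₀ (by positivity)] at hR
    rw [mul_div_assoc', div_le_iff₀ ha]
    nlinarith [sq_nonneg R]
  simp_rw [hintegrand]
  calc _ ≤ K₂ * (∫ ρ in (0:ℝ)..R, s * (ρ * sinh (a * ρ))) - K₁ * σbar * (R ^ 3 / 3) :=
        integral_mul_sub_mul_sq_le hR0.le hσ0.le hμ hμb (by fun_prop) fun ρ ⟨hρ0, _⟩ => by
          have := sinh_nonneg_iff.mpr (mul_nonneg ha.le hρ0)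
          positivity
    _ < 0 := sub_neg.mpr (hmass.trans_le hRbound)

theorem stmt_18 (K₁ K₂ σbar l K : ℝ) (hK₁ : 0 < K₁) (hK₂ : 0 < K₂)
    (hσ : σbar ∈ Set.Ioo (0:ℝ) 1) (hl : 0 < l) (hK : 0 < K)
    (hKdef : Real.exp (-(Real.sqrt l * K)) = σbar / 3) :
    ∃ R₁ : ℝ, ∀ R ≥ R₁, ∀ μ : ℝ → ℝ, Measurable μ →
      (∀ ρ ∈ Set.Icc (0:ℝ) R, K₁ ≤ μ ρ ∧ μ ρ ≤ K₂) →
      (∫ ρ in (0:ℝ)..R,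
        μ ρ * ((R / Real.sinh (Real.sqrt l * R)) * (Real.sinh (Real.sqrt l * ρ) / ρ) - σbar)
          * ρ ^ 2) < 0 :=
  stmt_18_general K₁ K₂ σbar l hK₁ hK₂ hσ hl
end
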